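/- arXiv:1703.02100 — 12 statements merged into one kernel-verified Lean document; each statement's English description precedes it below -/
import Mathlib

section
/- Let V be a finite ground set, F a nonnegative, normalized, nondecreasing set function on V, let γ ∈ (0,1] be such that F has submodularity ratio at least γ, and let α ∈ (0,1] be such that F has generalized curvature at most α. Let K ≥ 1, let ∅ = S⁰ ⊂ S¹ ⊂ ⋯ ⊂ S^K be a greedy sequence of length K for F, and let Ω* ⊆ V be any set with |Ω*| ≤ K. Then F(S^K) ≥ (1/α)·[1 − ((K − αγ)/K)^K]·F(Ω*) ≥ (1/α)·(1 − e^{−αγ})·F(Ω*). -/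
open Finset

/-!
Write `D_t = F(Sᵗ ∪ Ω*) − F(Sᵗ)` for the gap left after `t` greedy steps and `k_t = |Ω* \ Sᵗ|`.
Submodularity ratio and the greedy rule give `γ D_t ≤ k_t ρ_{t+1}` for the next gain `ρ_{t+1}`;
curvature gives `D_{t+1} ≥ D_t − α ρ_{t+1}` when `j_t ∉ Ω*`, while `D_{t+1} = D_t − ρ_{t+1}`
and `k_{t+1} = k_t − 1` when `j_t ∈ Ω*`. Backward induction from `t = K` then shows that the
last `r` steps close at least the fraction `(1 − N(r, k))/α` of the gap, where
`N(r, k) = max ((1 − αγ/k)^r, 1 − α)`. At `t = 0` the gap is `F(Ω*)`, and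
`N(K, |Ω*|) ≤ (1 − αγ/K)^K ≤ e^{−αγ}`.
-/

/-- `N(r, k)` above; the value at `k = 0` (no gap left) is the least the overlap step allows. -/
noncomputable def greedyDeficit (α γ : ℝ) (r k : ℕ) : ℝ :=
  if k = 0 then 1 - α else max ((1 - α * γ / k) ^ r) (1 - α)

section greedyDeficit

variable {α γ : ℝ}

theorem one_sub_le_greedyDeficit (r k : ℕ) : 1 - α ≤ greedyDeficit α γ r k := by
  unfold greedyDeficit
  split_ifs
  exacts [le_rfl, le_max_right _ _]

theorem one_sub_div_mem_Icc (hα : 0 ≤ α) (hγ : 0 ≤ γ) (hαγ : α * γ ≤ 1) {k : ℕ} (hk : k ≠ 0) :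
    1 - α * γ / k ∈ Set.Icc (0 : ℝ) 1 := by
  have hk1 : (1 : ℝ) ≤ k := by exact_mod_cast Nat.one_le_iff_ne_zero.mpr hk
  exact ⟨sub_nonneg.2 (div_le_one_of_le₀ (hαγ.trans hk1) (by positivity)),
    sub_le_self _ (by positivity)⟩

theorem greedyDeficit_le_one (hα : 0 ≤ α) (hγ : 0 ≤ γ) (hαγ : α * γ ≤ 1) (r k : ℕ) :
    greedyDeficit α γ r k ≤ 1 := by
  unfold greedyDeficit
  split_ifs with hk
  · linarith
  · obtain ⟨hp0, hp1⟩ := one_sub_div_mem_Icc hα hγ hαγ hk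
    exact max_le (pow_le_one₀ hp0 hp1) (by linarith)

theorem mul_greedyDeficit_le_succ (hα0 : 0 ≤ α) (hα1 : α ≤ 1) (hγ : 0 ≤ γ) (hαγ : α * γ ≤ 1)
    (r : ℕ) {k : ℕ} (hk : k ≠ 0) :
    (1 - α * γ / k) * greedyDeficit α γ r k ≤ greedyDeficit α γ (r + 1) k := by
  obtain ⟨hp0, hp1⟩ := one_sub_div_mem_Icc hα0 hγ hαγ hk
  simp only [greedyDeficit, if_neg hk, mul_max_of_nonneg _ _ hp0]
  exact max_le_max (le_of_eq (pow_succ' _ _).symm) (mul_le_of_le_one_left (by linarith) hp1)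

theorem mix_pow_le_max_pow {p q g c : ℝ} (hp : 0 ≤ p) (hpq : p ≤ q) (hq : q ≤ 1) (hg : g ≤ 1)
    (hc : 0 ≤ c) (hbase : 1 - g + g * c ≤ q) (hstep : (1 - p) * g ≤ q - p) (r : ℕ) :
    (1 - g) * p ^ r + g * c ≤ max (q ^ (r + 1)) c := by
  induction r with
  | zero => simpa using hbase.trans (le_max_left _ _)
  | succ r ih =>
    have hrec : (1 - g) * p ^ (r + 1) + g * c =
        p * ((1 - g) * p ^ r + g * c) + (1 - p) * g * c := by
      ring
    rw [hrec]
    rcases le_total (q ^ (r + 1)) c with h | h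
    · rw [max_eq_right h] at ih
      have hgc : (1 - p) * g * c ≤ (1 - p) * c := by
        nlinarith [mul_nonneg (sub_nonneg.2 (hpq.trans hq)) (mul_nonneg (sub_nonneg.2 hg) hc)]
      calc _ ≤ p * c + (1 - p) * c := add_le_add (mul_le_mul_of_nonneg_left ih hp) hgc
        _ = c := by ring
        _ ≤ _ := le_max_right _ _
    · rw [max_eq_left h] at ih
      calc _ ≤ p * q ^ (r + 1) + (q - p) * q ^ (r + 1) :=
            add_le_add (mul_le_mul_of_nonneg_left ih hp)
              ((mul_le_mul_of_nonneg_right hstep hc).trans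
                (mul_le_mul_of_nonneg_left h (sub_nonneg.2 hpq)))
        _ = q ^ (r + 1 + 1) := by ring
        _ ≤ _ := le_max_left _ _

theorem greedyDeficit_succ_succ (hα0 : 0 ≤ α) (hα1 : α ≤ 1) (hγ0 : 0 ≤ γ) (hγ1 : γ ≤ 1)
    (r k : ℕ) :
    (1 - γ / ↑(k + 1)) * greedyDeficit α γ r k + (1 - α) * (γ / ↑(k + 1)) ≤
      greedyDeficit α γ (r + 1) (k + 1) := by
  rcases eq_or_ne k 0 with rfl | hk
  · calc _ = 1 - α := by rw [greedyDeficit, if_pos rfl]; push_cast; ring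
      _ ≤ _ := one_sub_le_greedyDeficit _ _
  have hαγ : α * γ ≤ 1 := mul_le_one₀ hα1 hγ0 hγ1
  have hk1 : (1 : ℝ) ≤ k := by exact_mod_cast Nat.one_le_iff_ne_zero.mpr hk
  obtain ⟨hp0, -⟩ := one_sub_div_mem_Icc hα0 hγ0 hαγ hk
  obtain ⟨-, hq1⟩ := one_sub_div_mem_Icc hα0 hγ0 hαγ k.succ_ne_zero
  have hg1 : γ / ↑(k + 1) ≤ 1 := div_le_one_of_le₀ (by push_cast; linarith) (by positivity)
  simp only [greedyDeficit, if_neg hk, if_neg k.succ_ne_zero]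
  rcases le_total ((1 - α * γ / k) ^ r) (1 - α) with h | h
  · rw [max_eq_right h]
    calc _ = 1 - α := by ring
      _ ≤ _ := le_max_right _ _
  · rw [max_eq_left h, mul_comm (1 - α)]
    refine mix_pow_le_max_pow hp0 ?_ hq1 hg1 (by linarith) (le_of_eq (by ring)) ?_ r
    · gcongr
      linarith
    · push_cast
      have e1 : (1 - (1 - α * γ / k)) * (γ / (k + 1)) = α * γ * γ / (k * (k + 1)) := by
        field_simp
        ring
      have e2 : 1 - α * γ / (k + 1) - (1 - α * γ / k) = α * γ / (k * (k + 1)) := by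
        field_simp
        ring
      rw [e1, e2]
      exact div_le_div_of_nonneg_right (mul_le_of_le_one_right (mul_nonneg hα0 hγ0) hγ1)
        (by positivity)

theorem greedyDeficit_le_pow (hα0 : 0 ≤ α) (hα1 : α ≤ 1) (hγ0 : 0 ≤ γ) (hγ1 : γ ≤ 1)
    {k K : ℕ} (hk : k ≤ K) (hK : 1 ≤ K) :
    greedyDeficit α γ K k ≤ (((K : ℝ) - α * γ) / K) ^ K := by
  have hK0 : (0 : ℝ) < K := by exact_mod_cast hK
  have hαγ : α * γ ≤ 1 := mul_le_one₀ hα1 hγ0 hγ1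
  rw [← one_sub_div hK0.ne']
  have hbernoulli : 1 - α ≤ (1 - α * γ / K) ^ K := by
    have h := one_add_mul_le_pow (a := -(α * γ / K))
      (by linarith [div_le_one_of_le₀ (hαγ.trans (by exact_mod_cast hK)) hK0.le]) K
    rw [mul_neg, mul_div_cancel₀ _ hK0.ne', ← sub_eq_add_neg, ← sub_eq_add_neg] at h
    linarith [mul_le_of_le_one_right hα0 hγ1]
  unfold greedyDeficit
  split_ifs with hk0
  · exact hbernoulli
  · refine max_le (pow_le_pow_left₀ (one_sub_div_mem_Icc hα0 hγ0 hαγ hk0).1 ?_ K) hbernoulli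
    gcongr

end greedyDeficit

/-- `θ` is `α` for a step outside `Ω*` (by curvature) and `1` for a step inside `Ω*`. -/
theorem mul_le_of_gap_step {α θ g N D D' ρ Y : ℝ} (hN : N ≤ 1) (hθ : θ * (1 - N) ≤ α)
    (hgD : g * D ≤ ρ) (hD' : D - θ * ρ ≤ D') (ih : (1 - N) * D' ≤ α * (Y - ρ)) :
    (1 - N + (α - θ * (1 - N)) * g) * D ≤ α * Y := by
  calc (1 - N + (α - θ * (1 - N)) * g) * D = (1 - N) * D + (α - θ * (1 - N)) * (g * D) := by
        ring
    _ ≤ (1 - N) * (D' + θ * ρ) + (α - θ * (1 - N)) * ρ := by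
        gcongr
        linarith
    _ = (1 - N) * D' + α * ρ := by ring
    _ ≤ α * Y := by linarith

section SetFunction

variable {V : Type*} [DecidableEq V]

def SubmodularityRatioAtLeast (F : Finset V → ℝ) (γ : ℝ) : Prop :=
  ∀ Ω S : Finset V, ∑ ω ∈ Ω \ S, (F (insert ω S) - F S) ≥ γ * (F (S ∪ Ω) - F S)

def GeneralizedCurvatureAtMost (F : Finset V → ℝ) (α : ℝ) : Prop :=
  ∀ Ω S : Finset V, ∀ i ∈ S, i ∉ Ω →
    F (insert i ((S.erase i) ∪ Ω)) - F ((S.erase i) ∪ Ω) ≥ (1 - α) * (F S - F (S.erase i))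

def IsGreedyChoice (F : Finset V → ℝ) (T : Finset V) (j : V) : Prop :=
  j ∉ T ∧ ∀ v ∉ T, F (insert v T) - F T ≤ F (insert j T) - F T

variable {F : Finset V → ℝ} {α γ : ℝ} {T Ω : Finset V} {j : V}

theorem SubmodularityRatioAtLeast.mul_gap_le (hF : SubmodularityRatioAtLeast F γ)
    (hj : IsGreedyChoice F T j) (Ω : Finset V) :
    γ * (F (T ∪ Ω) - F T) ≤ (Ω \ T).card * (F (insert j T) - F T) :=
  calc γ * (F (T ∪ Ω) - F T) ≤ ∑ ω ∈ Ω \ T, (F (insert ω T) - F T) := hF Ω T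
    _ ≤ (Ω \ T).card • (F (insert j T) - F T) :=
        sum_le_card_nsmul _ _ _ fun ω hω => hj.2 ω (mem_sdiff.1 hω).2
    _ = _ := nsmul_eq_mul _ _

theorem GeneralizedCurvatureAtMost.le_gain_union (hF : GeneralizedCurvatureAtMost F α)
    (hjT : j ∉ T) (hjΩ : j ∉ Ω) :
    (1 - α) * (F (insert j T) - F T) ≤ F (insert j T ∪ Ω) - F (T ∪ Ω) := by
  have h := hF Ω (insert j T) j (mem_insert_self j T) hjΩ
  rwa [erase_insert hjT, ← insert_union] at h

theorem union_eq_left_of_card_sdiff_eq_zero (h : (Ω \ T).card = 0) : T ∪ Ω = T :=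
  union_eq_left.2 (sdiff_eq_empty_iff_subset.1 (card_eq_zero.1 h))

theorem one_sub_greedyDeficit_zero_mul_gap (hα : 0 ≤ α) :
    (1 - greedyDeficit α γ 0 (Ω \ T).card) * (F (T ∪ Ω) - F T) = 0 := by
  unfold greedyDeficit
  split_ifs with h
  · rw [union_eq_left_of_card_sdiff_eq_zero h, sub_self, mul_zero]
  · rw [pow_zero, max_eq_left (by linarith), sub_self, zero_mul]

theorem gap_le_of_greedy_step (hα0 : 0 < α) (hα1 : α ≤ 1) (hγ0 : 0 ≤ γ) (hγ1 : γ ≤ 1)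
    (hmono : Monotone F) (hratio : SubmodularityRatioAtLeast F γ)
    (hcurv : GeneralizedCurvatureAtMost F α) (hj : IsGreedyChoice F T j) {X : ℝ} {r : ℕ}
    (ih : (1 - greedyDeficit α γ r (Ω \ insert j T).card) *
        (F (insert j T ∪ Ω) - F (insert j T)) ≤ α * (X - F (insert j T))) :
    (1 - greedyDeficit α γ (r + 1) (Ω \ T).card) * (F (T ∪ Ω) - F T) ≤ α * (X - F T) := by
  have hαγ : α * γ ≤ 1 := mul_le_one₀ hα1 hγ0 hγ1
  have hρ : 0 ≤ F (insert j T) - F T := sub_nonneg.2 (hmono (subset_insert j T))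
  have hD : 0 ≤ F (T ∪ Ω) - F T := sub_nonneg.2 (hmono subset_union_left)
  have hD' : 0 ≤ F (insert j T ∪ Ω) - F (insert j T) := sub_nonneg.2 (hmono subset_union_left)
  have hN' := greedyDeficit_le_one hα0.le hγ0 hαγ r (Ω \ insert j T).card
  have hN'α := one_sub_le_greedyDeficit (α := α) (γ := γ) r (Ω \ insert j T).card
  obtain hk | hk := eq_or_ne (Ω \ T).card 0
  · rw [union_eq_left_of_card_sdiff_eq_zero hk, sub_self, mul_zero]
    nlinarith [mul_nonneg (sub_nonneg.2 hN') hD', mul_nonneg hα0.le hρ]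
  have hgD : γ / (Ω \ T).card * (F (T ∪ Ω) - F T) ≤ F (insert j T) - F T := by
    rw [div_mul_eq_mul_div, div_le_iff₀ (by positivity), mul_comm (F _ - F T)]
    exact hratio.mul_gap_le hj Ω
  by_cases hjΩ : j ∈ Ω
  · have hU : insert j T ∪ Ω = T ∪ Ω := by
      rw [insert_union, insert_eq_of_mem (mem_union_right T hjΩ)]
    have hk' : (Ω \ T).card = (Ω \ insert j T).card + 1 := by
      rw [sdiff_insert, card_erase_add_one (mem_sdiff.2 ⟨hjΩ, hj.1⟩)]
    rw [hU] at ih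
    rw [hk'] at hgD ⊢
    have hstep := mul_le_of_gap_step (α := α) (θ := 1) (D' := F (T ∪ Ω) - F (insert j T))
      (Y := X - F T) hN' (by linarith) hgD (by linarith) (by linear_combination ih)
    have hrec := greedyDeficit_succ_succ hα0.le hα1 hγ0 hγ1 r (Ω \ insert j T).card
    refine le_trans (mul_le_mul_of_nonneg_right ?_ hD) hstep
    linear_combination hrec
  · have hk' : Ω \ insert j T = Ω \ T := sdiff_insert_of_notMem hjΩ T
    rw [hk'] at ih hN' hN'α
    have hstep := mul_le_of_gap_step (θ := α) (D' := F (insert j T ∪ Ω) - F (insert j T))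
      (Y := X - F T) hN' (mul_le_of_le_one_right hα0.le (by linarith)) hgD
      (by linarith [hcurv.le_gain_union hj.1 hjΩ]) (by linear_combination ih)
    have hrec := mul_greedyDeficit_le_succ hα0.le hα1 hγ0 hαγ r hk
    refine le_trans (mul_le_mul_of_nonneg_right ?_ hD) hstep
    linear_combination hrec

end SetFunction

theorem greedy_approximation_guarantee_general
    {V : Type*} [DecidableEq V]
    (F : Finset V → ℝ) (γ α : ℝ)
    (hγ0 : 0 < γ) (hγ1 : γ ≤ 1) (hα0 : 0 < α) (hα1 : α ≤ 1)
    (hF0 : F ∅ = 0)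
    (hFmono : ∀ A B : Finset V, A ⊆ B → F A ≤ F B)
    (hratio : ∀ Ω S : Finset V,
      ∑ ω ∈ Ω \ S, (F (insert ω S) - F S) ≥ γ * (F (S ∪ Ω) - F S))
    (hcurv : ∀ Ω S : Finset V, ∀ i ∈ S, i ∉ Ω →
      F (insert i ((S.erase i) ∪ Ω)) - F ((S.erase i) ∪ Ω) ≥
        (1 - α) * (F S - F (S.erase i)))
    (K : ℕ) (hK : 1 ≤ K)
    (S : ℕ → Finset V) (j : ℕ → V)
    (hS0 : S 0 = ∅)
    (hSstep : ∀ t < K, S (t + 1) = insert (j t) (S t))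
    (hjnew : ∀ t < K, j t ∉ S t)
    (hgreedy : ∀ t < K, ∀ v ∉ S t,
      F (insert (j t) (S t)) - F (S t) ≥ F (insert v (S t)) - F (S t))
    (Ωopt : Finset V) (hΩ : Ωopt.card ≤ K) :
    F (S K) ≥ (1 / α) * (1 - (((K : ℝ) - α * γ) / K) ^ K) * F Ωopt ∧
      (1 / α) * (1 - (((K : ℝ) - α * γ) / K) ^ K) * F Ωopt ≥
        (1 / α) * (1 - Real.exp (-(α * γ))) * F Ωopt := by
  have hmono : Monotone F := fun A B h => hFmono A B h
  have hgap : ∀ t ≤ K, (1 - greedyDeficit α γ (K - t) (Ωopt \ S t).card) *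
      (F (S t ∪ Ωopt) - F (S t)) ≤ α * (F (S K) - F (S t)) := by
    intro t ht
    induction ht using Nat.decreasingInduction with
    | self => rw [Nat.sub_self, one_sub_greedyDeficit_zero_mul_gap hα0.le, sub_self, mul_zero]
    | of_succ t ht ih =>
      rw [hSstep t ht] at ih
      rw [show K - t = K - (t + 1) + 1 by omega]
      exact gap_le_of_greedy_step hα0 hα1 hγ0.le hγ1 hmono hratio hcurv
        ⟨hjnew t ht, hgreedy t ht⟩ ih
  have h0 := hgap 0 K.zero_le
  rw [Nat.sub_zero, hS0, empty_union, sdiff_empty, hF0, sub_zero, sub_zero] at h0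
  have hFΩ : 0 ≤ F Ωopt := hF0 ▸ hmono (empty_subset Ωopt)
  have hpow := greedyDeficit_le_pow hα0.le hα1 hγ0.le hγ1 hΩ hK
  have hexp : (((K : ℝ) - α * γ) / K) ^ K ≤ Real.exp (-(α * γ)) := by
    rw [← one_sub_div (by positivity)]
    exact Real.one_sub_div_pow_le_exp_neg
      ((mul_le_one₀ hα1 hγ0.le hγ1).trans (by exact_mod_cast hK))
  constructor
  · calc (1 / α) * (1 - (((K : ℝ) - α * γ) / K) ^ K) * F Ωopt
        ≤ (1 / α) * ((1 - greedyDeficit α γ K Ωopt.card) * F Ωopt) := by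
          rw [← mul_assoc]
          gcongr
      _ ≤ (1 / α) * (α * F (S K)) := by gcongr
      _ = F (S K) := by field_simp
  · gcongr

/-- **Approximation guarantee for Greedy on non-submodular functions.**
If `F` is nonnegative, normalized, nondecreasing, with submodularity ratio at
least `γ ∈ (0,1]` and generalized curvature at most `α ∈ (0,1]`, and
`∅ = S⁰ ⊂ ⋯ ⊂ S^K` is a greedy sequence, then for any `Ω*` with `|Ω*| ≤ K`,
`F(S^K) ≥ (1/α)(1 − ((K−αγ)/K)^K) F(Ω*) ≥ (1/α)(1 − e^{−αγ}) F(Ω*)`. -/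
theorem greedy_approximation_guarantee
    {V : Type*} [DecidableEq V] [Fintype V]
    (F : Finset V → ℝ) (γ α : ℝ)
    (hγ0 : 0 < γ) (hγ1 : γ ≤ 1) (hα0 : 0 < α) (hα1 : α ≤ 1)
    (hF0 : F ∅ = 0)
    (hFnonneg : ∀ S : Finset V, 0 ≤ F S)
    (hFmono : ∀ A B : Finset V, A ⊆ B → F A ≤ F B)
    (hratio : ∀ Ω S : Finset V,
      ∑ ω ∈ Ω \ S, (F (insert ω S) - F S) ≥ γ * (F (S ∪ Ω) - F S))
    (hcurv : ∀ Ω S : Finset V, ∀ i ∈ S, i ∉ Ω →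
      F (insert i ((S.erase i) ∪ Ω)) - F ((S.erase i) ∪ Ω) ≥
        (1 - α) * (F S - F (S.erase i)))
    (K : ℕ) (hK : 1 ≤ K)
    (S : ℕ → Finset V) (j : ℕ → V)
    (hS0 : S 0 = ∅)
    (hSstep : ∀ t < K, S (t + 1) = insert (j t) (S t))
    (hjnew : ∀ t < K, j t ∉ S t)
    (hgreedy : ∀ t < K, ∀ v ∉ S t,
      F (insert (j t) (S t)) - F (S t) ≥ F (insert v (S t)) - F (S t))
    (Ωopt : Finset V) (hΩ : Ωopt.card ≤ K) :
    F (S K) ≥ (1 / α) * (1 - (((K : ℝ) - α * γ) / K) ^ K) * F Ωopt ∧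
      (1 / α) * (1 - (((K : ℝ) - α * γ) / K) ^ K) * F Ωopt ≥
        (1 / α) * (1 - Real.exp (-(α * γ))) * F Ωopt :=
  greedy_approximation_guarantee_general F γ α hγ0 hγ1 hα0 hα1 hF0 hFmono hratio hcurv K hK S j hS0
    hSstep hjnew hgreedy Ωopt hΩ
end

section
/- Let V be a finite ground set, F a nonnegative, normalized, nondecreasing set function on V with submodularity ratio at least γ ∈ (0,1] and generalized curvature at most α ∈ [0,1]. Let ∅ = S⁰ ⊂ S¹ ⊂ ⋯ ⊂ S^K be a greedy sequence of length K for F and write ρ_i := F(S^i) − F(S^{i−1}). Then for every Ω ⊆ V with |Ω| = K and every t ∈ {0, 1, …, K−1}, writing w^t := |S^t ∩ Ω|, one has α·Σ_{i ≤ t, j_i ∈ S^t \ Ω} ρ_i + Σ_{i ≤ t, j_i ∈ S^t ∩ Ω} ρ_i + (1/γ)·(K − w^t)·ρ_{t+1} ≥ F(Ω). -/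
/-!
Compare `F (S^t ∪ Ω)` with both ends. By the curvature bound, every greedy element outside `Ω`
still gains at least `(1 - α) ρ_i` when added on top of `Ω`, so telescoping along the chain gives
`F (S^t ∪ Ω) ≥ F Ω + (1 - α) Σ_{j_i ∉ Ω} ρ_i`. By the submodularity ratio and the greedy choice,
`γ (F (S^t ∪ Ω) - F (S^t)) ≤ |Ω \ S^t| ρ_{t+1} = (K - w^t) ρ_{t+1}`. Since `F (S^t) = Σ_i ρ_i`,
the two bounds combine to the claim.
-/

open Finset

theorem sum_range_gain_eq {V : Type*} {F : Finset V → ℝ} {S : ℕ → Finset V}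
    (hS0 : S 0 = ∅) (hF0 : F ∅ = 0) (t : ℕ) :
    ∑ i ∈ range t, (F (S (i + 1)) - F (S i)) = F (S t) := by
  rw [sum_range_sub (fun i => F (S i)), hS0, hF0, sub_zero]

section SetFunction

variable {V : Type*} [DecidableEq V] {F : Finset V → ℝ}

theorem curvature_gain_le_gain_union {α : ℝ}
    (hcurv : ∀ Ω S : Finset V, ∀ i ∈ S, i ∉ Ω →
      F (insert i ((S.erase i) ∪ Ω)) - F ((S.erase i) ∪ Ω) ≥
        (1 - α) * (F S - F (S.erase i)))
    {Ω A : Finset V} {x : V} (hx : x ∉ Ω) :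
    (1 - α) * (F (insert x A) - F A) ≤ F (insert x (A ∪ Ω)) - F (A ∪ Ω) := by
  by_cases hxA : x ∈ A
  · simp [insert_eq_of_mem hxA, insert_eq_of_mem (mem_union_left Ω hxA)]
  · simpa [erase_insert hxA] using hcurv Ω (insert x A) x (mem_insert_self x A) hx

theorem ratio_mul_gain_union_le_card_mul {γ g : ℝ}
    (hratio : ∀ Ω S : Finset V,
      ∑ ω ∈ Ω \ S, (F (insert ω S) - F S) ≥ γ * (F (S ∪ Ω) - F S))
    {Ω S : Finset V} (hg : ∀ v ∉ S, F (insert v S) - F S ≤ g) :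
    γ * (F (S ∪ Ω) - F S) ≤ #(Ω \ S) * g :=
  calc γ * (F (S ∪ Ω) - F S) ≤ ∑ ω ∈ Ω \ S, (F (insert ω S) - F S) := hratio Ω S
    _ ≤ ∑ _ω ∈ Ω \ S, g := sum_le_sum fun ω hω => hg ω (mem_sdiff.mp hω).2
    _ = #(Ω \ S) * g := by rw [sum_const, nsmul_eq_mul]

variable {K : ℕ} {S : ℕ → Finset V} {j : ℕ → V}

theorem chain_eq_image_range (hS0 : S 0 = ∅)
    (hSstep : ∀ t < K, S (t + 1) = insert (j t) (S t)) :
    ∀ t ≤ K, S t = (range t).image j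
  | 0, _ => by simp [hS0]
  | t + 1, ht => by
    rw [hSstep t ht, chain_eq_image_range hS0 hSstep t (Nat.le_of_succ_le ht), range_add_one,
      image_insert]

theorem one_sub_mul_sum_gain_not_mem_le {α : ℝ}
    (hcurv : ∀ Ω S : Finset V, ∀ i ∈ S, i ∉ Ω →
      F (insert i ((S.erase i) ∪ Ω)) - F ((S.erase i) ∪ Ω) ≥
        (1 - α) * (F S - F (S.erase i)))
    (hS0 : S 0 = ∅) (hSstep : ∀ t < K, S (t + 1) = insert (j t) (S t))
    (Ω : Finset V) {t : ℕ} (ht : t ≤ K) :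
    (1 - α) * ∑ i ∈ (range t).filter (fun i => j i ∉ Ω), (F (S (i + 1)) - F (S i)) ≤
      F (S t ∪ Ω) - F Ω := by
  have htel : ∑ i ∈ range t, (F (S (i + 1) ∪ Ω) - F (S i ∪ Ω)) = F (S t ∪ Ω) - F Ω := by
    rw [sum_range_sub (fun i => F (S i ∪ Ω)), hS0, empty_union]
  rw [mul_sum, sum_filter, ← htel]
  refine sum_le_sum fun i hi => ?_
  rw [hSstep i ((mem_range.mp hi).trans_le ht), insert_union]
  split_ifs with hj
  · rw [insert_eq_of_mem (mem_union_right _ hj), sub_self]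
  · exact curvature_gain_le_gain_union hcurv hj

end SetFunction

theorem greedy_lp_constraint_lemma_general
    {V : Type*} [DecidableEq V]
    (F : Finset V → ℝ) (γ α : ℝ)
    (hγ0 : 0 < γ)
    (hF0 : F ∅ = 0)
    (hratio : ∀ Ω S : Finset V,
      ∑ ω ∈ Ω \ S, (F (insert ω S) - F S) ≥ γ * (F (S ∪ Ω) - F S))
    (hcurv : ∀ Ω S : Finset V, ∀ i ∈ S, i ∉ Ω →
      F (insert i ((S.erase i) ∪ Ω)) - F ((S.erase i) ∪ Ω) ≥
        (1 - α) * (F S - F (S.erase i)))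
    (K : ℕ)
    (S : ℕ → Finset V) (j : ℕ → V)
    (hS0 : S 0 = ∅)
    (hSstep : ∀ t < K, S (t + 1) = insert (j t) (S t))
    (hgreedy : ∀ t < K, ∀ v ∉ S t,
      F (insert (j t) (S t)) - F (S t) ≥ F (insert v (S t)) - F (S t))
    (Ωset : Finset V) (hΩ : Ωset.card = K)
    (t : ℕ) (ht : t < K) :
    α * ∑ i ∈ (Finset.range t).filter (fun i => j i ∈ S t \ Ωset),
        (F (S (i + 1)) - F (S i)) +
      ∑ i ∈ (Finset.range t).filter (fun i => j i ∈ S t ∩ Ωset),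
        (F (S (i + 1)) - F (S i)) +
      (1 / γ) * ((K : ℝ) - ((S t ∩ Ωset).card : ℝ)) * (F (S (t + 1)) - F (S t)) ≥
    F Ωset := by
  have hjmem : ∀ i ∈ range t, j i ∈ S t := fun i hi =>
    chain_eq_image_range hS0 hSstep t ht.le ▸ mem_image_of_mem j hi
  have hsdiff : (range t).filter (fun i => j i ∈ S t \ Ωset)
      = (range t).filter (fun i => j i ∉ Ωset) := filter_congr fun i hi => by simp [hjmem i hi]
  have hinter : (range t).filter (fun i => j i ∈ S t ∩ Ωset)
      = (range t).filter (fun i => j i ∈ Ωset) := filter_congr fun i hi => by simp [hjmem i hi]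
  rw [hsdiff, hinter]
  have hsplit := sum_filter_not_add_sum_filter (range t) (fun i => j i ∈ Ωset)
    (fun i => F (S (i + 1)) - F (S i))
  rw [sum_range_gain_eq hS0 hF0] at hsplit
  have hlower := one_sub_mul_sum_gain_not_mem_le hcurv hS0 hSstep Ωset ht.le
  have hcard : (#(Ωset \ S t) : ℝ) = K - #(S t ∩ Ωset) := by
    rw [eq_sub_iff_add_eq, inter_comm, ← hΩ]
    exact_mod_cast card_sdiff_add_card_inter Ωset (S t)
  have hupper : F (S t ∪ Ωset) - F (S t) ≤
      (1 / γ) * ((K : ℝ) - #(S t ∩ Ωset)) * (F (S (t + 1)) - F (S t)) := by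
    have hratio_t := ratio_mul_gain_union_le_card_mul hratio (Ω := Ωset)
      fun v hv => hSstep t ht ▸ hgreedy t ht v hv
    rw [hcard] at hratio_t
    rw [div_mul_eq_mul_div, div_mul_eq_mul_div, one_mul, le_div_iff₀ hγ0]
    linarith
  linarith

/-- **Lemma 1 of Bian et al.** For a nonnegative, normalized, nondecreasing set
function with submodularity ratio at least `γ ∈ (0,1]` and generalized curvature
at most `α ∈ [0,1]`, a greedy sequence `S⁰ ⊂ ⋯ ⊂ S^K` with marginal gains
`ρ_i = F(Sⁱ) − F(S^{i−1})` satisfies, for all `Ω` with `|Ω| = K` and `t < K`,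
`α·Σ_{i≤t, j_i ∈ S^t\Ω} ρ_i + Σ_{i≤t, j_i ∈ S^t∩Ω} ρ_i + (1/γ)(K − w^t) ρ_{t+1} ≥ F(Ω)`. -/
theorem greedy_lp_constraint_lemma
    {V : Type*} [DecidableEq V] [Fintype V]
    (F : Finset V → ℝ) (γ α : ℝ)
    (hγ0 : 0 < γ) (hγ1 : γ ≤ 1) (hα0 : 0 ≤ α) (hα1 : α ≤ 1)
    (hF0 : F ∅ = 0)
    (hFnonneg : ∀ S : Finset V, 0 ≤ F S)
    (hFmono : ∀ A B : Finset V, A ⊆ B → F A ≤ F B)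
    (hratio : ∀ Ω S : Finset V,
      ∑ ω ∈ Ω \ S, (F (insert ω S) - F S) ≥ γ * (F (S ∪ Ω) - F S))
    (hcurv : ∀ Ω S : Finset V, ∀ i ∈ S, i ∉ Ω →
      F (insert i ((S.erase i) ∪ Ω)) - F ((S.erase i) ∪ Ω) ≥
        (1 - α) * (F S - F (S.erase i)))
    (K : ℕ)
    (S : ℕ → Finset V) (j : ℕ → V)
    (hS0 : S 0 = ∅)
    (hSstep : ∀ t < K, S (t + 1) = insert (j t) (S t))
    (hjnew : ∀ t < K, j t ∉ S t)
    (hgreedy : ∀ t < K, ∀ v ∉ S t,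
      F (insert (j t) (S t)) - F (S t) ≥ F (insert v (S t)) - F (S t))
    (Ωset : Finset V) (hΩ : Ωset.card = K)
    (t : ℕ) (ht : t < K) :
    α * ∑ i ∈ (Finset.range t).filter (fun i => j i ∈ S t \ Ωset),
        (F (S (i + 1)) - F (S i)) +
      ∑ i ∈ (Finset.range t).filter (fun i => j i ∈ S t ∩ Ωset),
        (F (S (i + 1)) - F (S i)) +
      (1 / γ) * ((K : ℝ) - ((S t ∩ Ωset).card : ℝ)) * (F (S (t + 1)) - F (S t)) ≥
    F Ωset :=
  greedy_lp_constraint_lemma_general F γ α hγ0 hF0 hratio hcurv K S j hS0 hSstep hgreedy Ωset hΩ t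
    ht
end

section
/- Let K ≥ 1 be an integer and α, γ ∈ (0,1]. Let x_1, …, x_K be nonnegative real numbers such that for every t ∈ {0, 1, …, K−1} the constraint α·(x_1 + ⋯ + x_t) + (K/γ)·x_{t+1} ≥ 1 holds. Then x_1 + ⋯ + x_K ≥ (1/α)·[1 − ((K − αγ)/K)^K]. Moreover, the vector given by x_i = (γ/K)·((K − γα)/K)^{i−1} for i = 1, …, K satisfies all of these constraints with equality and attains this value, so (1/α)·[1 − ((K − αγ)/K)^K] is the optimal value of the corresponding linear program. -/
/-!
Write `β = K/γ` and `r = 1 - α/β = (K - αγ)/K`. If `S_t` is the `t`-th partial sum, the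
constraint `α S_t + β x_t ≥ 1` bounds `α x_t` below by `(α/β)(1 - α S_t)`, so the slack
`1 - α S_t` shrinks at least by the factor `r` at every step and is at most `r^t`. The
geometric vector `x_i = r^i / β` makes every step an equality, and its partial sums are
`(1 - r^t)/α` by the geometric series formula.
-/

open Finset

theorem one_sub_pow_le_mul_sum_of_constraints {α β : ℝ} {x : ℕ → ℝ} {n : ℕ}
    (hα : 0 ≤ α) (hβ : 0 < β) (hαβ : α ≤ β)
    (hx : ∀ t < n, α * ∑ i ∈ range t, x i + β * x t ≥ 1) :
    1 - (1 - α / β) ^ n ≤ α * ∑ i ∈ range n, x i := by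
  have hr : 0 ≤ 1 - α / β := sub_nonneg.2 ((div_le_one hβ).2 hαβ)
  have slack_contracts : ∀ t < n, 1 - α * ∑ i ∈ range (t + 1), x i ≤
      (1 - α / β) * (1 - α * ∑ i ∈ range t, x i) := by
    intro t ht
    have hxt : α / β * (1 - α * ∑ i ∈ range t, x i) ≤ α * x t := by
      calc α / β * (1 - α * ∑ i ∈ range t, x i)
          ≤ α / β * (β * x t) := by gcongr; linarith [hx t ht]
        _ = α * x t := by field_simp
    rw [sum_range_succ]
    linarith
  have slack_le := le_geom (u := fun t => 1 - α * ∑ i ∈ range t, x i) hr n slack_contracts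
  simp only [range_zero, sum_empty, mul_zero, sub_zero, mul_one] at slack_le
  linarith

theorem mul_sum_range_geom_witness (α β : ℝ) (n : ℕ) :
    α * ∑ i ∈ range n, β⁻¹ * (1 - α / β) ^ i = 1 - (1 - α / β) ^ n := by
  rw [← mul_sum, ← mul_assoc, ← div_eq_mul_inv, ← mul_neg_geom_sum, sub_sub_cancel]

theorem geom_witness_constraint_eq (α : ℝ) {β : ℝ} (hβ : β ≠ 0) (t : ℕ) :
    α * ∑ i ∈ range t, β⁻¹ * (1 - α / β) ^ i + β * (β⁻¹ * (1 - α / β) ^ t) = 1 := by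
  rw [mul_sum_range_geom_witness, ← mul_assoc, mul_inv_cancel₀ hβ, one_mul, sub_add_cancel]

/-- **The worst-case greedy LP and its optimal value.** For `K ≥ 1` and
`α, γ ∈ (0,1]`: any nonnegative `x` satisfying
`α(x_1 + ⋯ + x_t) + (K/γ)·x_{t+1} ≥ 1` for all `t ∈ {0,…,K−1}` (here 0-indexed)
has `x_1 + ⋯ + x_K ≥ (1/α)(1 − ((K−αγ)/K)^K)`; moreover the explicit vector
`x_i = (γ/K)((K−γα)/K)^{i−1}` is nonnegative, satisfies every constraint with
equality, and attains this value, so it is the optimal value of the LP. -/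
theorem greedy_lp_optimal_value (K : ℕ) (hK : 1 ≤ K) (α γ : ℝ)
    (hα0 : 0 < α) (hα1 : α ≤ 1) (hγ0 : 0 < γ) (hγ1 : γ ≤ 1) :
    (∀ x : ℕ → ℝ, (∀ i < K, 0 ≤ x i) →
      (∀ t < K, α * ∑ i ∈ Finset.range t, x i + ((K : ℝ) / γ) * x t ≥ 1) →
      ∑ i ∈ Finset.range K, x i ≥
        (1 / α) * (1 - (((K : ℝ) - α * γ) / K) ^ K)) ∧
    (∀ i < K, 0 ≤ (γ / (K : ℝ)) * (((K : ℝ) - γ * α) / K) ^ i) ∧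
    (∀ t < K,
      α * ∑ i ∈ Finset.range t, (γ / (K : ℝ)) * (((K : ℝ) - γ * α) / K) ^ i +
        ((K : ℝ) / γ) * ((γ / (K : ℝ)) * (((K : ℝ) - γ * α) / K) ^ t) = 1) ∧
    (∑ i ∈ Finset.range K, (γ / (K : ℝ)) * (((K : ℝ) - γ * α) / K) ^ i =
      (1 / α) * (1 - (((K : ℝ) - α * γ) / K) ^ K)) := by
  have hK0 : (0 : ℝ) < K := by exact_mod_cast hK
  have hβ : (0 : ℝ) < K / γ := by positivity
  have hαβ : α ≤ K / γ := by
    rw [le_div_iff₀ hγ0]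
    nlinarith [(Nat.one_le_cast (α := ℝ)).2 hK]
  have hr : 0 ≤ 1 - α / (K / γ) := sub_nonneg.2 ((div_le_one hβ).2 hαβ)
  have hratio : ((K : ℝ) - γ * α) / K = 1 - α / (K / γ) := by field_simp
  have hratio' : ((K : ℝ) - α * γ) / K = 1 - α / (K / γ) := by rw [mul_comm, hratio]
  have hstep : γ / (K : ℝ) = (K / γ)⁻¹ := (inv_div _ _).symm
  simp only [hratio, hratio', hstep, one_div_mul_eq_div, ge_iff_le]
  refine ⟨fun x _ hx => ?_, fun i _ => mul_nonneg (by positivity) (pow_nonneg hr i), fun t _ => ?_, ?_⟩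
  · rw [div_le_iff₀' hα0]
    exact one_sub_pow_le_mul_sum_of_constraints hα0.le hβ hαβ hx
  · exact geom_witness_constraint_eq α hβ.ne' t
  · rw [eq_div_iff hα0.ne', mul_comm]
    exact mul_sum_range_geom_witness α _ K
end

section
/- For all integers n ≥ m ≥ 1 and every γ ∈ (0,1], one has Σ_{k=1}^{m} (γ/n)·Π_{i=1}^{k−1} ((n − i + 1 − γ)/(n − i)) ≤ 1 (the product over the empty index range being 1). Consequently, in the greedy LP perturbation argument, decreasing one coordinate by ε > 0 and increasing the subsequent coordinates by the recursively defined amounts ε_{q+1} = ε·γ/(K−r) and ε_{q+1+u} = ε_{q+u}·(K − r − u + 1 − γ)/(K − r − u) never increases the LP objective. -/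
/-!
Write `P_k = ∏_{i=1}^{k} (n-i+1-γ)/(n-i)` (`ratioProd`), `w_k = (γ/n) P_{k-1}` (`weight`)
for the summands, and `R_k = ∏_{i=1}^{k} (1 - γ/(n-i+1))` (`survival`). For `k < n` the factors `(n-i)/(n-i+1)` telescope,
giving `n R_k = (n-k) P_k`, hence `w_{k+1} = R_k · γ/(n-k) = R_k - R_{k+1}`. So the sum
of the first `m ≤ n` summands is `1 - R_m`, which is at most `1` because `γ ≤ 1` makes every
factor of `R_m` nonnegative. The recursively defined increments are exactly `ε w_u`
with `n = K - r`, so they sum to at most `ε`.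
-/

open Finset

namespace GreedyLP

variable (n : ℕ) (γ : ℝ)

noncomputable def ratioProd (k : ℕ) : ℝ :=
  ∏ i ∈ Icc 1 k, (((n : ℝ) - (i : ℝ) + 1 - γ) / ((n : ℝ) - (i : ℝ)))

noncomputable def weight (k : ℕ) : ℝ :=
  γ / n * ratioProd n γ (k - 1)

noncomputable def survival (k : ℕ) : ℝ :=
  ∏ i ∈ Icc 1 k, (1 - γ / ((n : ℝ) - i + 1))

variable {n γ}

lemma ratioProd_succ (k : ℕ) :
    ratioProd n γ (k + 1) = ratioProd n γ k * ((n - k - γ) / (n - k - 1)) := by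
  rw [ratioProd, prod_Icc_succ_top (by omega), ← ratioProd]
  push_cast
  ring_nf

lemma survival_succ (k : ℕ) :
    survival n γ (k + 1) = survival n γ k * (1 - γ / (n - k)) := by
  rw [survival, prod_Icc_succ_top (by omega), ← survival]
  push_cast
  ring_nf

lemma natCast_mul_survival {k : ℕ} (hk : k < n) :
    n * survival n γ k = (n - k) * ratioProd n γ k := by
  induction k with
  | zero => simp [survival, ratioProd]
  | succ k ih =>
    have hlt : ((k + 1 : ℕ) : ℝ) < n := by exact_mod_cast hk
    push_cast at hlt
    have h₁ : (n : ℝ) - k ≠ 0 := by linarith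
    have h₂ : (n : ℝ) - k - 1 ≠ 0 := by linarith
    rw [survival_succ, ratioProd_succ, ← mul_assoc, ih (by omega)]
    push_cast
    field_simp
    ring

lemma weight_succ {k : ℕ} (hk : k < n) :
    weight n γ (k + 1) = survival n γ k - survival n γ (k + 1) := by
  have hpos : (0 : ℝ) < n - k := sub_pos.mpr (by exact_mod_cast hk)
  have hn : (n : ℝ) ≠ 0 := by linarith [(k.cast_nonneg : (0 : ℝ) ≤ k)]
  have hS : survival n γ k = (n - k) * ratioProd n γ k / n := by
    rw [eq_div_iff hn, mul_comm]
    exact natCast_mul_survival hk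
  rw [survival_succ, weight, Nat.add_sub_cancel, hS]
  field_simp
  ring

lemma sum_weight {m : ℕ} (hm : m ≤ n) :
    ∑ k ∈ Icc 1 m, weight n γ k = 1 - survival n γ m := by
  induction m with
  | zero => simp [survival]
  | succ m ih =>
    rw [sum_Icc_succ_top (by omega), ih (by omega), weight_succ (by omega)]
    ring

lemma survival_nonneg (hγ : γ ≤ 1) {m : ℕ} (hm : m ≤ n) : 0 ≤ survival n γ m := by
  refine prod_nonneg fun i hi => ?_
  have hi : (i : ℝ) ≤ n := by exact_mod_cast (mem_Icc.mp hi).2.trans hm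
  rw [sub_nonneg, div_le_one (by linarith)]
  linarith

lemma sum_weight_le_one (hγ : γ ≤ 1) {m : ℕ} (hm : m ≤ n) :
    ∑ k ∈ Icc 1 m, weight n γ k ≤ 1 := by
  rw [sum_weight hm]
  linarith [survival_nonneg hγ hm]

lemma eq_mul_weight_of_rec {M : ℕ} {ε : ℝ} {e : ℕ → ℝ} (he : e 1 = ε * γ / n)
    (hrec : ∀ u : ℕ, 1 ≤ u → u + 1 ≤ M → e (u + 1) = e u * ((n - u + 1 - γ) / (n - u))) :
    ∀ u ∈ Icc 1 M, e u = ε * weight n γ u := by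
  intro u hu
  obtain ⟨hu1, huM⟩ := mem_Icc.mp hu
  clear hu
  induction u, hu1 using Nat.le_induction with
  | base => simp [weight, ratioProd, he, mul_div_assoc]
  | succ u hu ih =>
    obtain ⟨v, rfl⟩ : ∃ v, u = v + 1 := ⟨u - 1, by omega⟩
    rw [hrec _ hu huM, ih (by omega), weight, weight,
      Nat.add_sub_cancel, Nat.add_sub_cancel, ratioProd_succ]
    push_cast
    ring

end GreedyLP

open GreedyLP in
theorem greedy_lp_perturbation_general (n m : ℕ) (hmn : m ≤ n)
    (γ : ℝ) (hγ1 : γ ≤ 1) :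
    (∑ k ∈ Finset.Icc 1 m, (γ / (n : ℝ)) *
        ∏ i ∈ Finset.Icc 1 (k - 1), (((n : ℝ) - (i : ℝ) + 1 - γ) / ((n : ℝ) - (i : ℝ)))
      ≤ 1) ∧
    (∀ (K r q : ℕ) (ε : ℝ) (e : ℕ → ℝ),
      1 ≤ r → r ≤ q → q < K → 0 < ε →
      e 1 = ε * γ / ((K : ℝ) - (r : ℝ)) →
      (∀ u : ℕ, 1 ≤ u → u + 1 ≤ K - q →
        e (u + 1) = e u * (((K : ℝ) - (r : ℝ) - (u : ℝ) + 1 - γ) /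
          ((K : ℝ) - (r : ℝ) - (u : ℝ)))) →
      -ε + ∑ u ∈ Finset.Icc 1 (K - q), e u ≤ 0) := by
  refine ⟨sum_weight_le_one hγ1 hmn, ?_⟩
  intro K r q ε e _ hrq hqK hε he hrec
  have hcast : ((K - r : ℕ) : ℝ) = K - r := Nat.cast_sub (by omega)
  rw [← hcast] at he hrec
  have hsum : ∑ u ∈ Icc 1 (K - q), e u = ε * ∑ u ∈ Icc 1 (K - q), weight (K - r) γ u := by
    rw [mul_sum]
    exact sum_congr rfl (eq_mul_weight_of_rec he hrec)
  have hle := sum_weight_le_one (n := K - r) hγ1 (m := K - q) (by omega)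
  rw [hsum]
  nlinarith

/-- **Partial-sum inequality and the perturbation claim (Δ_LP ≤ 0).** For
`n ≥ m ≥ 1` and `γ ∈ (0,1]`,
`Σ_{k=1}^m (γ/n)·Π_{i=1}^{k−1} ((n−i+1−γ)/(n−i)) ≤ 1`. Consequently, in the
greedy LP perturbation argument (with `1 ≤ r ≤ q < K`, `n = K−r`, `m = K−q`),
decreasing one coordinate by `ε > 0` and increasing the subsequent coordinates by
`ε_{q+1} = ε·γ/(K−r)` and `ε_{q+1+u} = ε_{q+u}·(K−r−u+1−γ)/(K−r−u)` never
increases the LP objective: `−ε + Σ_{u=1}^{K−q} ε_{q+u} ≤ 0`. -/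
theorem greedy_lp_perturbation (n m : ℕ) (hm : 1 ≤ m) (hmn : m ≤ n)
    (γ : ℝ) (hγ0 : 0 < γ) (hγ1 : γ ≤ 1) :
    (∑ k ∈ Finset.Icc 1 m, (γ / (n : ℝ)) *
        ∏ i ∈ Finset.Icc 1 (k - 1), (((n : ℝ) - (i : ℝ) + 1 - γ) / ((n : ℝ) - (i : ℝ)))
      ≤ 1) ∧
    (∀ (K r q : ℕ) (ε : ℝ) (e : ℕ → ℝ),
      1 ≤ r → r ≤ q → q < K → 0 < ε →
      e 1 = ε * γ / ((K : ℝ) - (r : ℝ)) →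
      (∀ u : ℕ, 1 ≤ u → u + 1 ≤ K - q →
        e (u + 1) = e u * (((K : ℝ) - (r : ℝ) - (u : ℝ) + 1 - γ) /
          ((K : ℝ) - (r : ℝ) - (u : ℝ)))) →
      -ε + ∑ u ∈ Finset.Icc 1 (K - q), e u ≤ 0) :=
  greedy_lp_perturbation_general n m hmn γ hγ1
end

section
/- Let F be a nondecreasing submodular set function on a finite ground set V with ρ_j(∅) > 0 for all j ∈ V, and define the total curvature α^total := 1 − min_{j ∈ V} ρ_j(V\{j}) / ρ_j(∅). Then: (i) for all Ω, S ⊆ V and all i ∈ S\Ω, one has ρ_i((S\{i}) ∪ Ω) ≥ (1 − α^total)·ρ_i(S\{i}); and (ii) α^total is the smallest constant with this property, i.e., there exist Ω, S ⊆ V and i ∈ S\Ω with ρ_i((S\{i}) ∪ Ω) = (1 − α^total)·ρ_i(S\{i}) and ρ_i(S\{i}) > 0. Hence for nondecreasing submodular functions the generalized curvature equals the classical total curvature. -/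
open Finset

/-!
Submodularity squeezes every marginal gain `ρ_i(A)` between `ρ_i(V \ {i})` and `ρ_i(∅)`, so
`ρ_i(B) ≥ ρ_i(V \ {i}) ≥ (1 - α^total) ρ_i(∅) ≥ (1 - α^total) ρ_i(A)` whenever `i ∉ A, B`;
monotonicity makes `1 - α^total` nonnegative, which the last step needs. Equality is attained
at the index `j` realising the minimum, with `S = {j}` and `Ω = V \ {j}`.
-/

theorem Finset.inf'_div_mul_le {ι : Type*} {s : Finset ι} (hs : s.Nonempty) (a b : ι → ℝ)
    {i : ι} (hi : i ∈ s) (hb : 0 < b i) :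
    s.inf' hs (fun j => a j / b j) * b i ≤ a i :=
  (le_div_iff₀ hb).1 (inf'_le _ hi)

theorem Finset.exists_inf'_div_mul_eq {ι : Type*} {s : Finset ι} (hs : s.Nonempty)
    (a b : ι → ℝ) (hb : ∀ j ∈ s, b j ≠ 0) :
    ∃ j ∈ s, s.inf' hs (fun j => a j / b j) * b j = a j := by
  obtain ⟨j, hj, hmin⟩ := exists_mem_eq_inf' hs (fun j => a j / b j)
  exact ⟨j, hj, by rw [hmin, div_mul_cancel₀ _ (hb j hj)]⟩

section Submodular

variable {V : Type*} [DecidableEq V] {F : Finset V → ℝ}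
  (hFsub : ∀ A B : Finset V, ∀ v : V, A ⊆ B → v ∉ B →
    F (insert v A) - F A ≥ F (insert v B) - F B)
include hFsub

theorem marginal_le_marginal_empty {i : V} {A : Finset V} (hA : i ∉ A) :
    F (insert i A) - F A ≤ F {i} - F ∅ :=
  hFsub ∅ A i (empty_subset A) hA

theorem marginal_univ_erase_le_marginal [Fintype V] {i : V} {B : Finset V} (hB : i ∉ B) :
    F univ - F (univ.erase i) ≤ F (insert i B) - F B := by
  simpa only [insert_erase (mem_univ i)] using
    hFsub B (univ.erase i) i (subset_erase.2 ⟨subset_univ B, hB⟩) (notMem_erase i univ)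

theorem mul_marginal_le_marginal [Fintype V] {c : ℝ} {i : V} (hc : 0 ≤ c)
    (hci : c * (F {i} - F ∅) ≤ F univ - F (univ.erase i))
    {A B : Finset V} (hA : i ∉ A) (hB : i ∉ B) :
    c * (F (insert i A) - F A) ≤ F (insert i B) - F B :=
  calc c * (F (insert i A) - F A) ≤ c * (F {i} - F ∅) :=
        mul_le_mul_of_nonneg_left (marginal_le_marginal_empty hFsub hA) hc
    _ ≤ F univ - F (univ.erase i) := hci
    _ ≤ F (insert i B) - F B := marginal_univ_erase_le_marginal hFsub hB

end Submodular

/-- **For nondecreasing submodular functions, generalized curvature equals the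
classical total curvature.** With `α^total = 1 − min_j ρ_j(V\{j})/ρ_j(∅)`:
(i) `ρ_i((S\{i}) ∪ Ω) ≥ (1 − α^total)·ρ_i(S\{i})` for all `Ω, S` and `i ∈ S\Ω`;
(ii) `α^total` is the smallest such constant: there are `Ω, S, i` attaining
equality with `ρ_i(S\{i}) > 0`. -/
theorem generalized_curvature_eq_total_curvature
    {V : Type*} [DecidableEq V] [Fintype V] [Nonempty V]
    (F : Finset V → ℝ)
    (hFmono : ∀ A B : Finset V, A ⊆ B → F A ≤ F B)
    (hFsub : ∀ A B : Finset V, ∀ v : V, A ⊆ B → v ∉ B →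
      F (insert v A) - F A ≥ F (insert v B) - F B)
    (hpos : ∀ j : V, 0 < F {j} - F ∅)
    (αtot : ℝ)
    (hαtot : αtot = 1 - Finset.univ.inf' Finset.univ_nonempty
      (fun j : V => (F Finset.univ - F (Finset.univ.erase j)) / (F {j} - F ∅))) :
    (∀ Ω S : Finset V, ∀ i ∈ S, i ∉ Ω →
      F (insert i ((S.erase i) ∪ Ω)) - F ((S.erase i) ∪ Ω) ≥
        (1 - αtot) * (F S - F (S.erase i))) ∧
    (∃ (Ω S : Finset V) (i : V), i ∈ S ∧ i ∉ Ω ∧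
      F (insert i ((S.erase i) ∪ Ω)) - F ((S.erase i) ∪ Ω) =
        (1 - αtot) * (F S - F (S.erase i)) ∧
      0 < F S - F (S.erase i)) := by
  have hαtot' : 1 - αtot = univ.inf' univ_nonempty
      (fun j : V => (F univ - F (univ.erase j)) / (F {j} - F ∅)) := by
    rw [hαtot, sub_sub_cancel]
  have hnonneg : 0 ≤ 1 - αtot := hαtot' ▸ le_inf' _ _ fun j _ =>
    div_nonneg (sub_nonneg.2 (hFmono _ _ (erase_subset j univ))) (hpos j).le
  refine ⟨fun Ω S i hi hiΩ => ?_, ?_⟩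
  · have hiB : i ∉ S.erase i ∪ Ω := by simp [hiΩ]
    have key := mul_marginal_le_marginal hFsub hnonneg
      (hαtot' ▸ inf'_div_mul_le _ _ _ (mem_univ i) (hpos i)) (notMem_erase i S) hiB
    rwa [insert_erase hi] at key
  · obtain ⟨j, -, hj⟩ := exists_inf'_div_mul_eq univ_nonempty
      (fun j : V => F univ - F (univ.erase j)) (fun j => F {j} - F ∅)
      fun j _ => (hpos j).ne'
    refine ⟨univ.erase j, {j}, j, mem_singleton_self j, notMem_erase j univ, ?_, ?_⟩
    · rw [erase_singleton, empty_union, insert_erase (mem_univ j), hαtot', hj]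
    · rw [erase_singleton]
      exact hpos j
end

section
/- Let K ≥ 2, α ∈ [0,1], and γ = 1, and let F be the tightness function on the ground set V = {s_1,…,s_K} ∪ {ω_1,…,ω_K}. Then F is submodular, i.e., F(A ∪ {v}) − F(A) ≥ F(B ∪ {v}) − F(B) for all A ⊆ B ⊆ V and v ∈ V \ B. (With γ = 1 one has f(x) = x.) -/
open Finset

/-- `ξ_i := (1/K)·((K − γα)/K)^{i}` (0-indexed, so `xi K α γ i` is the paper's `ξ_{i+1}`). -/
noncomputable def xi (K : ℕ) (α γ : ℝ) (i : Fin K) : ℝ :=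
  (1 / (K : ℝ)) * (((K : ℝ) - γ * α) / (K : ℝ)) ^ (i : ℕ)

/-- `f(x) := ((γ⁻¹ − 1)/(K − 1))·x² + ((K − γ⁻¹)/(K − 1))·x`. -/
noncomputable def fconv (K : ℕ) (γ : ℝ) (x : ℝ) : ℝ :=
  ((γ⁻¹ - 1) / ((K : ℝ) - 1)) * x ^ 2 + (((K : ℝ) - γ⁻¹) / ((K : ℝ) - 1)) * x

/-- The tightness function on the ground set `V = {s_1,…,s_K} ∪ {ω_1,…,ω_K}`,
modeled as `Fin K ⊕ Fin K` with `Sum.inl i = s_{i+1}` and `Sum.inr i = ω_{i+1}`: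
`F(T) = (f(|T ∩ Ω|)/K)·(1 − αγ·Σ_{i : s_i ∈ T} ξ_i) + Σ_{i : s_i ∈ T} ξ_i`. -/
noncomputable def tightF (K : ℕ) (α γ : ℝ) (T : Finset (Fin K ⊕ Fin K)) : ℝ :=
  (fconv K γ (((Finset.univ.filter (fun i : Fin K => Sum.inr i ∈ T)).card : ℝ)) / (K : ℝ)) *
      (1 - α * γ * ∑ i ∈ Finset.univ.filter (fun i : Fin K => Sum.inl i ∈ T), xi K α γ i) +
    ∑ i ∈ Finset.univ.filter (fun i : Fin K => Sum.inl i ∈ T), xi K α γ i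

/-!
With `γ = 1` the convex function `f` is the identity, so writing `m(T)` for the number of
`ω`'s in `T` and `S(T)` for the `ξ`-mass of the `s`'s in `T`,
`F(T) = m(T)/K + S(T) − (α/K)·m(T)·S(T)`.
Both `m` and `S` are sums over `T` of nonnegative weights, so the linear part is modular and
`m·S` is supermodular: if `v` carries weights `a` in `m` and `b` in `S`, inserting it raises
`m·S` by `a·S + b·m + a·b`, which grows with the set.
-/

section DiminishingReturns

variable {ι : Type*} [DecidableEq ι]

def HasDiminishingReturns (F : Finset ι → ℝ) : Prop :=
  ∀ ⦃A B : Finset ι⦄ ⦃v : ι⦄, A ⊆ B → v ∉ B → F (insert v B) - F B ≤ F (insert v A) - F A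

theorem HasDiminishingReturns.add {F G : Finset ι → ℝ} (hF : HasDiminishingReturns F)
    (hG : HasDiminishingReturns G) : HasDiminishingReturns (F + G) := fun A B v hAB hvB => by
  have := hF hAB hvB
  have := hG hAB hvB
  simp only [Pi.add_apply]
  linarith

theorem hasDiminishingReturns_sum (c : ι → ℝ) :
    HasDiminishingReturns fun T => ∑ x ∈ T, c x := fun A B v hAB hvB => by
  beta_reduce
  rw [sum_insert hvB, sum_insert fun hvA => hvB (hAB hvA)]
  linarith

theorem hasDiminishingReturns_neg_sum_mul_sum {a b : ι → ℝ} (ha : 0 ≤ a) (hb : 0 ≤ b) :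
    HasDiminishingReturns fun T => -((∑ x ∈ T, a x) * ∑ x ∈ T, b x) := fun A B v hAB hvB => by
  have hvA : v ∉ A := fun h => hvB (hAB h)
  have hsa : ∑ x ∈ A, a x ≤ ∑ x ∈ B, a x := sum_le_sum_of_subset_of_nonneg hAB fun i _ _ => ha i
  have hsb : ∑ x ∈ A, b x ≤ ∑ x ∈ B, b x := sum_le_sum_of_subset_of_nonneg hAB fun i _ _ => hb i
  beta_reduce
  rw [sum_insert hvA, sum_insert hvA, sum_insert hvB, sum_insert hvB]
  nlinarith [mul_le_mul_of_nonneg_left hsb (ha v), mul_le_mul_of_nonneg_left hsa (hb v)]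

end DiminishingReturns

theorem filter_inl_mem_eq_toLeft {α β : Type*} [Fintype α] [DecidableEq α] [DecidableEq β]
    (T : Finset (α ⊕ β)) : univ.filter (fun i => Sum.inl i ∈ T) = T.toLeft := by
  ext; simp

theorem filter_inr_mem_eq_toRight {α β : Type*} [Fintype β] [DecidableEq α] [DecidableEq β]
    (T : Finset (α ⊕ β)) : univ.filter (fun i => Sum.inr i ∈ T) = T.toRight := by
  ext; simp

theorem fconv_one {K : ℕ} (hK : K ≠ 1) (x : ℝ) : fconv K 1 x = x := by
  have : (K : ℝ) - 1 ≠ 0 := sub_ne_zero.2 (by exact_mod_cast hK)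
  simp [fconv, this]

theorem xi_nonneg {K : ℕ} {α γ : ℝ} (h : γ * α ≤ K) (i : Fin K) : 0 ≤ xi K α γ i := by
  have : 0 ≤ (K : ℝ) - γ * α := sub_nonneg.2 h
  unfold xi
  positivity

theorem tightF_one_eq {K : ℕ} (hK : K ≠ 1) (α : ℝ) (T : Finset (Fin K ⊕ Fin K)) :
    tightF K α 1 T = ∑ x ∈ T, Sum.elim (xi K α 1) (fun _ => 1 / K) x -
      (∑ x ∈ T, Sum.elim (fun _ => 0) (fun _ => α / K) x) *
        ∑ x ∈ T, Sum.elim (xi K α 1) (fun _ => 0) x := by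
  simp only [tightF, fconv_one hK, filter_inl_mem_eq_toLeft, filter_inr_mem_eq_toRight,
    sum_sum_eq_sum_toLeft_add_sum_toRight, Sum.elim_inl, Sum.elim_inr, sum_const,
    nsmul_eq_mul]
  ring

theorem tightF_one_hasDiminishingReturns {K : ℕ} (hK : 2 ≤ K) {α : ℝ} (hα0 : 0 ≤ α)
    (hα1 : α ≤ 1) : HasDiminishingReturns (tightF K α 1) := by
  have hαK : 1 * α ≤ K := by
    have : (2 : ℝ) ≤ K := by exact_mod_cast hK
    linarith
  have hω : (0 : Fin K ⊕ Fin K → ℝ) ≤ Sum.elim (fun _ => 0) fun _ => α / K :=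
    Sum.forall.2 ⟨fun _ => le_rfl, fun _ => div_nonneg hα0 K.cast_nonneg⟩
  have hs : (0 : Fin K ⊕ Fin K → ℝ) ≤ Sum.elim (xi K α 1) fun _ => 0 :=
    Sum.forall.2 ⟨xi_nonneg hαK, fun _ => le_rfl⟩
  convert (hasDiminishingReturns_sum (Sum.elim (xi K α 1) fun _ => 1 / K)).add
    (hasDiminishingReturns_neg_sum_mul_sum hω hs) using 1
  funext T
  rw [tightF_one_eq (by omega), Pi.add_apply, sub_eq_add_neg]

/-- **Tightness function with `γ = 1` is submodular.** -/
theorem tightF_submodular_of_gamma_one (K : ℕ) (hK : 2 ≤ K)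
    (α : ℝ) (hα0 : 0 ≤ α) (hα1 : α ≤ 1) :
    ∀ A B : Finset (Fin K ⊕ Fin K), ∀ v : Fin K ⊕ Fin K, A ⊆ B → v ∉ B →
      tightF K α 1 (insert v A) - tightF K α 1 A ≥
        tightF K α 1 (insert v B) - tightF K α 1 B :=
  fun _ _ _ hAB hvB => tightF_one_hasDiminishingReturns hK hα0 hα1 hAB hvB
end

section
/- Let K ≥ 2, α ∈ [0,1], γ ∈ (0,1], and let F be the tightness function on the ground set V = {s_1,…,s_K} ∪ {ω_1,…,ω_K}. Then F has generalized curvature exactly α: (i) F((S\{i}) ∪ Ω ∪ {i}) − F((S\{i}) ∪ Ω) ≥ (1 − α)·(F(S) − F(S\{i})) for all Ω, S ⊆ V and i ∈ S\Ω; and (ii) equality is attained with positive marginal gains, e.g., for S = {s_j} (any j), i = s_j, and Ω = {ω_1,…,ω_K}, where F(Ω ∪ {s_j}) − F(Ω) = (1 − α)·ξ_j and F({s_j}) − F(∅) = ξ_j > 0. -/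
open Finset

/-!
Write `F(T) = g(b)·(1 − αγ·X) + X` with `b = |T ∩ {ω}|`, `g = f/K` and `X = Σ_{s_i ∈ T} ξ_i`.
Adding `s_j` gains `ξ_j·(1 − α·γg(b))` and adding `ω_j` gains `(g(b+1) − g(b))·(1 − α·γX)`:
in both cases a nonnegative factor that only grows with the set (convexity of `f` for `ω_j`)
times `1 − α·u` with `u ∈ [0,1]`, because `γ f(b) ≤ γ f(K) = K` and `ξ_i ≤ 1/K`.
Such a gain can shrink at most by the factor `1 − α` when the set grows, and for `s_j` on top
of all of `{ω}` it does so exactly, since `γ f(K) = K`.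
-/

lemma mul_one_sub_mul_le {α p q u v : ℝ} (hα0 : 0 ≤ α) (hα1 : α ≤ 1) (hp : 0 ≤ p)
    (hpq : p ≤ q) (hu : 0 ≤ u) (hv : v ≤ 1) :
    (1 - α) * (p * (1 - α * u)) ≤ q * (1 - α * v) := by
  nlinarith [mul_nonneg (mul_nonneg (sub_nonneg.2 hα1) hp) (mul_nonneg hα0 hu),
    mul_nonneg hp (mul_nonneg hα0 (sub_nonneg.2 hv)),
    mul_nonneg (sub_nonneg.2 hpq) (sub_nonneg.2 (mul_le_mul_of_nonneg_left hv hα0))]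

section xi

variable {K : ℕ} {α γ : ℝ}

lemma xi_pos (hK : 0 < K) (hγα : γ * α < K) (i : Fin K) : 0 < xi K α γ i := by
  have hK' : (0 : ℝ) < K := by exact_mod_cast hK
  unfold xi
  have : 0 < ((K : ℝ) - γ * α) / K := div_pos (by linarith) hK'
  positivity

lemma xi_le (hγα0 : 0 ≤ γ * α) (hγα : γ * α ≤ K) (i : Fin K) : xi K α γ i ≤ 1 / K := by
  have hr0 : 0 ≤ ((K : ℝ) - γ * α) / K := div_nonneg (by linarith) (Nat.cast_nonneg K)
  have hr1 : ((K : ℝ) - γ * α) / K ≤ 1 := div_le_one_of_le₀ (by linarith) (Nat.cast_nonneg K)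
  unfold xi
  exact mul_le_of_le_one_right (by positivity) (pow_le_one₀ hr0 hr1)

lemma sum_xi_le_one (hγα0 : 0 ≤ γ * α) (hγα : γ * α ≤ K) (t : Finset (Fin K)) :
    ∑ i ∈ t, xi K α γ i ≤ 1 := by
  calc ∑ i ∈ t, xi K α γ i ≤ #t * (1 / K : ℝ) := by
        simpa using sum_le_sum fun i (_ : i ∈ t) => xi_le hγα0 hγα i
    _ ≤ K * (1 / K : ℝ) := by gcongr; simpa using card_le_univ t
    _ ≤ 1 := by rw [mul_one_div]; exact div_self_le_one _

end xi

section fconv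

variable {K : ℕ} {γ : ℝ}

lemma fconv_add_one_sub (hK : 1 < K) (x : ℝ) :
    fconv K γ (x + 1) - fconv K γ x = 2 * ((γ⁻¹ - 1) / (K - 1)) * x + 1 := by
  have : (K : ℝ) - 1 ≠ 0 := sub_ne_zero.2 (by exact_mod_cast hK.ne')
  unfold fconv
  field_simp
  ring

lemma fconv_natCast_self (hK : 1 < K) (hγ : γ ≠ 0) : fconv K γ K = K / γ := by
  have : (K : ℝ) - 1 ≠ 0 := sub_ne_zero.2 (by exact_mod_cast hK.ne')
  unfold fconv
  field_simp
  ring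

lemma fconv_coeff_nonneg (hK : 1 < K) (hγ0 : 0 < γ) (hγ1 : γ ≤ 1) :
    0 ≤ (γ⁻¹ - 1) / ((K : ℝ) - 1) :=
  div_nonneg (sub_nonneg.2 (one_le_inv₀ hγ0 |>.2 hγ1)) (sub_nonneg.2 (by exact_mod_cast hK.le))

lemma fconv_add_one_sub_nonneg (hK : 1 < K) (hγ0 : 0 < γ) (hγ1 : γ ≤ 1) {x : ℝ} (hx : 0 ≤ x) :
    0 ≤ fconv K γ (x + 1) - fconv K γ x := by
  rw [fconv_add_one_sub hK]
  have := fconv_coeff_nonneg hK hγ0 hγ1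
  positivity

lemma fconv_add_one_sub_mono (hK : 1 < K) (hγ0 : 0 < γ) (hγ1 : γ ≤ 1) {x y : ℝ}
    (hxy : x ≤ y) :
    fconv K γ (x + 1) - fconv K γ x ≤ fconv K γ (y + 1) - fconv K γ y := by
  rw [fconv_add_one_sub hK, fconv_add_one_sub hK]
  gcongr
  exact mul_nonneg zero_le_two (fconv_coeff_nonneg hK hγ0 hγ1)

lemma monotone_fconv_natCast (hK : 1 < K) (hγ0 : 0 < γ) (hγ1 : γ ≤ 1) :
    Monotone fun n : ℕ => fconv K γ n :=
  monotone_nat_of_le_succ fun n => by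
    simpa using fconv_add_one_sub_nonneg hK hγ0 hγ1 (Nat.cast_nonneg n)

lemma fconv_natCast_nonneg (hK : 1 < K) (hγ0 : 0 < γ) (hγ1 : γ ≤ 1) (n : ℕ) :
    0 ≤ fconv K γ n := by
  simpa [fconv] using monotone_fconv_natCast hK hγ0 hγ1 (Nat.zero_le n)

lemma mul_fconv_natCast_le (hK : 1 < K) (hγ0 : 0 < γ) (hγ1 : γ ≤ 1) {n : ℕ} (hn : n ≤ K) :
    γ * fconv K γ n ≤ K := by
  calc γ * fconv K γ n ≤ γ * fconv K γ K :=
        mul_le_mul_of_nonneg_left (monotone_fconv_natCast hK hγ0 hγ1 hn) hγ0.le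
    _ = K := by rw [fconv_natCast_self hK hγ0.ne']; field_simp

end fconv

section tightF

variable {K : ℕ} {α γ : ℝ}

lemma tightF_eq_toLeft_toRight (T : Finset (Fin K ⊕ Fin K)) :
    tightF K α γ T = fconv K γ #T.toRight / K * (1 - α * γ * ∑ i ∈ T.toLeft, xi K α γ i) +
      ∑ i ∈ T.toLeft, xi K α γ i := by
  have hl : univ.filter (fun i : Fin K => Sum.inl i ∈ T) = T.toLeft := by ext; simp
  have hr : univ.filter (fun i : Fin K => Sum.inr i ∈ T) = T.toRight := by ext; simp
  rw [tightF, hl, hr]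

lemma tightF_insert_inl_sub {T : Finset (Fin K ⊕ Fin K)} {j : Fin K} (hj : .inl j ∉ T) :
    tightF K α γ (insert (.inl j) T) - tightF K α γ T =
      xi K α γ j * (1 - α * (γ * fconv K γ #T.toRight / K)) := by
  rw [tightF_eq_toLeft_toRight, tightF_eq_toLeft_toRight, toLeft_insert_inl, toRight_insert_inl,
    sum_insert (by simpa using hj)]
  ring

lemma tightF_insert_inr_sub {T : Finset (Fin K ⊕ Fin K)} {j : Fin K} (hj : .inr j ∉ T) :
    tightF K α γ (insert (.inr j) T) - tightF K α γ T =
      (fconv K γ (#T.toRight + 1) - fconv K γ #T.toRight) / K *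
        (1 - α * (γ * ∑ i ∈ T.toLeft, xi K α γ i)) := by
  rw [tightF_eq_toLeft_toRight, tightF_eq_toLeft_toRight, toLeft_insert_inr, toRight_insert_inr,
    card_insert_of_notMem (by simpa using hj)]
  push_cast
  ring

lemma tightF_insert_sub_ge_of_subset (hK : 1 < K) (hα0 : 0 ≤ α) (hα1 : α ≤ 1)
    (hγ0 : 0 < γ) (hγ1 : γ ≤ 1) {A B : Finset (Fin K ⊕ Fin K)} (hBA : B ⊆ A) {x : Fin K ⊕ Fin K}
    (hx : x ∉ A) :
    (1 - α) * (tightF K α γ (insert x B) - tightF K α γ B) ≤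
      tightF K α γ (insert x A) - tightF K α γ A := by
  have hxB : x ∉ B := fun h => hx (hBA h)
  have hK' : (0 : ℝ) < K := by exact_mod_cast hK.pos
  have hγα0 : 0 ≤ γ * α := by positivity
  have hγαK : γ * α < K := (mul_le_one₀ hγ1 hα0 hα1).trans_lt (by exact_mod_cast hK)
  have hxi : ∀ i, 0 ≤ xi K α γ i := fun i => (xi_pos hK.pos hγαK i).le
  rcases x with j | j
  · rw [tightF_insert_inl_sub hx, tightF_insert_inl_sub hxB]
    refine mul_one_sub_mul_le hα0 hα1 (hxi j) le_rfl
      (by have := fconv_natCast_nonneg hK hγ0 hγ1 #B.toRight; positivity) ?_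
    rw [div_le_one hK']
    exact mul_fconv_natCast_le hK hγ0 hγ1 (by simpa using card_le_univ A.toRight)
  · rw [tightF_insert_inr_sub hx, tightF_insert_inr_sub hxB]
    refine mul_one_sub_mul_le hα0 hα1 ?_ ?_ ?_ ?_
    · exact div_nonneg (fconv_add_one_sub_nonneg hK hγ0 hγ1 (Nat.cast_nonneg _)) hK'.le
    · refine div_le_div_of_nonneg_right (fconv_add_one_sub_mono hK hγ0 hγ1 ?_) hK'.le
      exact_mod_cast card_le_card (toRight_subset_toRight hBA)
    · exact mul_nonneg hγ0.le (sum_nonneg fun i _ => hxi i)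
    · exact mul_le_one₀ hγ1 (sum_nonneg fun i _ => hxi i) (sum_xi_le_one hγα0 hγαK.le _)

end tightF

/-- **The tightness function has generalized curvature exactly `α`.**
(i) `ρ_i((S\{i}) ∪ Ω) ≥ (1 − α)·ρ_i(S\{i})` for all `Ω, S` and `i ∈ S\Ω`;
(ii) equality is attained with positive marginal gains: for every `j`, taking
`S = {s_j}`, `i = s_j`, `Ω = {ω_1,…,ω_K}` gives
`F(Ω ∪ {s_j}) − F(Ω) = (1 − α)·ξ_j` and `F({s_j}) − F(∅) = ξ_j > 0`. -/
theorem tightF_generalized_curvature (K : ℕ) (hK : 2 ≤ K)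
    (α γ : ℝ) (hα0 : 0 ≤ α) (hα1 : α ≤ 1) (hγ0 : 0 < γ) (hγ1 : γ ≤ 1) :
    (∀ Ω S : Finset (Fin K ⊕ Fin K), ∀ i ∈ S, i ∉ Ω →
      tightF K α γ (insert i ((S.erase i) ∪ Ω)) - tightF K α γ ((S.erase i) ∪ Ω) ≥
        (1 - α) * (tightF K α γ S - tightF K α γ (S.erase i))) ∧
    (∀ j : Fin K,
      tightF K α γ (insert (Sum.inl j)
          (Finset.univ.image (Sum.inr : Fin K → Fin K ⊕ Fin K))) -
        tightF K α γ (Finset.univ.image (Sum.inr : Fin K → Fin K ⊕ Fin K)) =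
          (1 - α) * xi K α γ j ∧
      tightF K α γ {Sum.inl j} - tightF K α γ ∅ = xi K α γ j ∧
      0 < xi K α γ j) := by
  have hγαK : γ * α < K := (mul_le_one₀ hγ1 hα0 hα1).trans_lt (by exact_mod_cast hK)
  refine ⟨fun Ω S i hiS hiΩ => ?_, fun j => ⟨?_, ?_, xi_pos (by omega) hγαK j⟩⟩
  · have := tightF_insert_sub_ge_of_subset hK hα0 hα1 hγ0 hγ1
      (subset_union_left (s₁ := S.erase i) (s₂ := Ω)) (x := i) (by simp [hiΩ])
    rwa [insert_erase hiS] at this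
  · have hωs : (univ.image (Sum.inr : Fin K → Fin K ⊕ Fin K)).toRight = univ := by ext; simp
    rw [tightF_insert_inl_sub (by simp), hωs, card_univ, Fintype.card_fin,
      fconv_natCast_self hK hγ0.ne']
    field_simp
  · rw [← insert_empty, tightF_insert_inl_sub (notMem_empty _)]
    simp [fconv, toRight]
end

section
/- Let β, σ > 0, let V be a finite index set, and for each v ∈ V let x_v ∈ ℝ^d with ‖x_v‖₂ = 1. Let c > 0 be such that Σ_{v∈V} x_v x_vᵀ ⪯ c·I_d (for instance c = ‖X‖², the squared spectral norm of the matrix X with columns x_v). Define F_A(S) := tr((β²·I_d)^{−1}) − tr((β²·I_d + σ^{−2}·Σ_{v∈S} x_v x_vᵀ)^{−1}) for S ⊆ V. Then for all Ω, S ⊆ V: Σ_{ω ∈ Ω\S} (F_A(S ∪ {ω}) − F_A(S)) ≥ (β² / (c·(β² + σ^{−2}c)))·(F_A(S ∪ Ω) − F_A(S)); that is, the submodularity ratio of F_A is at least β²/(c(β² + σ^{−2}c)). -/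
/-!
Write `M = β²I + σ⁻² Σ_{v∈S} x_v x_vᵀ ⪰ β²I` and `u_ω = M⁻¹ x_ω`. By the resolvent identity
`M⁻¹ - (M + Δ)⁻¹ = M⁻¹ Δ M⁻¹ - M⁻¹ Δ (M + Δ)⁻¹ Δ M⁻¹`, adding `Δ = σ⁻² Σ_{ω∈Ω∖S} x_ω x_ωᵀ`
gains at most `tr (M⁻¹ Δ M⁻¹) = σ⁻² Σ_{ω∈Ω∖S} ‖u_ω‖²`. By Sherman–Morrison, adding a single
`x_ω` gains exactly `σ⁻² ‖u_ω‖² / (1 + σ⁻² x_ωᵀ M⁻¹ x_ω)`, and `x_ωᵀ M⁻¹ x_ω ≤ β⁻²` since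
`‖x_ω‖ = 1`; so the ratio is at least `β² / (β² + σ⁻²)`. This dominates the claimed constant
because the hypothesis on `c` forces `c ≥ ‖x_ω‖² = 1`.
-/

open Finset Matrix

/-- The Bayesian A-optimality objective
`F_A(S) = tr((β²I)⁻¹) − tr((β²I + σ⁻²·Σ_{v∈S} x_v x_vᵀ)⁻¹)`. -/
noncomputable def bayesA {V : Type*} [DecidableEq V] (d : ℕ) (β σ : ℝ)
    (x : V → Fin d → ℝ) (S : Finset V) : ℝ :=
  Matrix.trace ((β ^ 2 • (1 : Matrix (Fin d) (Fin d) ℝ))⁻¹) -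
    Matrix.trace ((β ^ 2 • (1 : Matrix (Fin d) (Fin d) ℝ) +
      (σ ^ 2)⁻¹ • ∑ v ∈ S, Matrix.vecMulVec (x v) (x v))⁻¹)

namespace Matrix

variable {n : Type*} [Fintype n]

theorem trace_mul_vecMulVec_mul {α : Type*} [CommSemiring α] (A B : Matrix n n α)
    (y z : n → α) :
    (A * vecMulVec y z * B).trace = (A *ᵥ y) ⬝ᵥ (z ᵥ* B) := by
  rw [mul_vecMulVec, vecMulVec_mul, trace_vecMulVec]

theorem IsHermitian.vecMul_eq_mulVec {A : Matrix n n ℝ} (hA : A.IsHermitian) (y : n → ℝ) :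
    y ᵥ* A = A *ᵥ y := by
  rw [← mulVec_transpose, ← conjTranspose_eq_transpose_of_trivial, hA.eq]

theorem posSemidef_smul_sum_vecMulVec_self {t : ℝ} (ht : 0 ≤ t) {ι : Type*} (s : Finset ι)
    (y : ι → n → ℝ) : (t • ∑ i ∈ s, vecMulVec (y i) (y i)).PosSemidef :=
  (posSemidef_sum s fun i _ => by simpa using posSemidef_vecMulVec_self_star (y i)).smul ht

theorem dotProduct_vecMulVec_self_mulVec {α : Type*} [CommSemiring α] (y z : n → α) :
    z ⬝ᵥ (vecMulVec y y *ᵥ z) = (y ⬝ᵥ z) ^ 2 := by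
  rw [vecMulVec_mulVec, dotProduct_smul, op_smul_eq_mul, dotProduct_comm, sq]

theorem dotProduct_self_nonneg (v : n → ℝ) : 0 ≤ v ⬝ᵥ v :=
  Fintype.sum_nonneg fun _ => mul_self_nonneg _

variable [DecidableEq n]

theorem sq_dotProduct_self_le_of_posSemidef_smul_one_sub {ι : Type*} {s : Finset ι}
    {y : ι → n → ℝ} {c : ℝ} (h : (c • 1 - ∑ i ∈ s, vecMulVec (y i) (y i)).PosSemidef)
    {j : ι} (hj : j ∈ s) : (y j ⬝ᵥ y j) ^ 2 ≤ c * (y j ⬝ᵥ y j) := by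
  have hq := h.dotProduct_mulVec_nonneg (y j)
  rw [star_trivial, sub_mulVec, smul_mulVec, one_mulVec, dotProduct_sub, dotProduct_smul,
    smul_eq_mul, sum_mulVec, dotProduct_sum] at hq
  simp only [dotProduct_vecMulVec_self_mulVec] at hq
  have := single_le_sum (f := fun i => (y i ⬝ᵥ y j) ^ 2) (fun i _ => sq_nonneg _) hj
  linarith

theorem PosDef.mulVec_inv_mulVec {M : Matrix n n ℝ} (hM : M.PosDef) (y : n → ℝ) :
    M *ᵥ (M⁻¹ *ᵥ y) = y := by
  rw [mulVec_mulVec, mul_nonsing_inv _ ((isUnit_iff_isUnit_det M).mp hM.isUnit), one_mulVec]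

theorem PosDef.inv_mulVec_mulVec {M : Matrix n n ℝ} (hM : M.PosDef) (y : n → ℝ) :
    M⁻¹ *ᵥ (M *ᵥ y) = y := by
  rw [mulVec_mulVec, nonsing_inv_mul _ ((isUnit_iff_isUnit_det M).mp hM.isUnit), one_mulVec]

theorem mul_dotProduct_inv_smul_one_add_mulVec_le {b : ℝ} (hb : 0 < b) {P : Matrix n n ℝ}
    (hP : P.PosSemidef) (y : n → ℝ) : b * (y ⬝ᵥ ((b • 1 + P)⁻¹ *ᵥ y)) ≤ y ⬝ᵥ y := by
  set u := (b • 1 + P)⁻¹ *ᵥ y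
  -- With `y = b u + P u`, `y ⬝ y - b (y ⬝ u) = b (u ⬝ P u) + ‖P u‖² ≥ 0`.
  have hy : y = b • u + P *ᵥ u := by
    have := ((PosDef.one.smul hb).add_posSemidef hP).mulVec_inv_mulVec y
    rwa [add_mulVec, smul_mulVec, one_mulVec, eq_comm] at this
  have huPu : 0 ≤ u ⬝ᵥ (P *ᵥ u) := by simpa using hP.dotProduct_mulVec_nonneg u
  have hPu := dotProduct_self_nonneg (P *ᵥ u)
  rw [hy]
  simp only [add_dotProduct, dotProduct_add, smul_dotProduct, dotProduct_smul, smul_eq_mul,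
    dotProduct_comm (P *ᵥ u) u]
  nlinarith

theorem PosDef.trace_inv_sub_trace_inv_add_le {M Δ : Matrix n n ℝ} (hM : M.PosDef)
    (hΔ : Δ.PosSemidef) : M⁻¹.trace - (M + Δ)⁻¹.trace ≤ (M⁻¹ * Δ * M⁻¹).trace := by
  have hN : (M + Δ).PosDef := hM.add_posSemidef hΔ
  have hunit : IsUnit M ↔ IsUnit (M + Δ) := by simp [hM.isUnit, hN.isUnit]
  have h₁ : M⁻¹ - (M + Δ)⁻¹ = M⁻¹ * Δ * (M + Δ)⁻¹ := by
    rw [inv_sub_inv hunit, add_sub_cancel_left]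
  have h₂ : M⁻¹ - (M + Δ)⁻¹ = (M + Δ)⁻¹ * Δ * M⁻¹ := by
    rw [← neg_sub, inv_sub_inv hunit.symm, sub_add_cancel_left, Matrix.mul_neg, Matrix.neg_mul,
      neg_neg]
  have hgap : M⁻¹ * Δ * M⁻¹ - (M⁻¹ - (M + Δ)⁻¹) = (Δ * M⁻¹)ᴴ * (M + Δ)⁻¹ * (Δ * M⁻¹) :=
    calc M⁻¹ * Δ * M⁻¹ - (M⁻¹ - (M + Δ)⁻¹) = (M⁻¹ - (M + Δ)⁻¹) * Δ * M⁻¹ := by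
          rw [sub_mul, sub_mul, ← h₂]
      _ = (Δ * M⁻¹)ᴴ * (M + Δ)⁻¹ * (Δ * M⁻¹) := by
          rw [h₁, conjTranspose_mul, hΔ.isHermitian.eq, hM.isHermitian.inv.eq]; noncomm_ring
  have := (hN.inv.posSemidef.conjTranspose_mul_mul_same (Δ * M⁻¹)).trace_nonneg
  rw [← hgap, trace_sub, trace_sub] at this
  linarith

/-- The trace form of the Sherman–Morrison formula. -/
theorem PosDef.trace_inv_sub_trace_inv_add_smul_vecMulVec {M : Matrix n n ℝ} (hM : M.PosDef)
    {t : ℝ} (ht : 0 ≤ t) (y : n → ℝ) :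
    M⁻¹.trace - (M + t • vecMulVec y y)⁻¹.trace =
      t / (1 + t * (y ⬝ᵥ (M⁻¹ *ᵥ y))) * ((M⁻¹ *ᵥ y) ⬝ᵥ (M⁻¹ *ᵥ y)) := by
  set u := M⁻¹ *ᵥ y
  set N := M + t • vecMulVec y y
  have hN : N.PosDef :=
    hM.add_posSemidef (by simpa using (posSemidef_vecMulVec_self_star y).smul ht)
  have hq : 0 ≤ y ⬝ᵥ u := by simpa using hM.inv.posSemidef.dotProduct_mulVec_nonneg y
  have hden : 1 + t * (y ⬝ᵥ u) ≠ 0 := by positivity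
  have hNu : N *ᵥ u = (1 + t * (y ⬝ᵥ u)) • y := by
    rw [add_mulVec, hM.mulVec_inv_mulVec, smul_mulVec, vecMulVec_mulVec, op_smul_eq_smul,
      smul_smul, add_smul, one_smul]
  have hNy : N⁻¹ *ᵥ y = (1 + t * (y ⬝ᵥ u))⁻¹ • u := by
    rw [eq_inv_smul_iff₀ hden, ← mulVec_smul, ← hNu, hN.inv_mulVec_mulVec]
  have hres : M⁻¹ - N⁻¹ = t • (M⁻¹ * vecMulVec y y * N⁻¹) := by
    rw [inv_sub_inv (by simp [hM.isUnit, hN.isUnit]), add_sub_cancel_left, Matrix.mul_smul,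
      Matrix.smul_mul]
  rw [← trace_sub, hres, trace_smul, trace_mul_vecMulVec_mul,
    hN.isHermitian.inv.vecMul_eq_mulVec, hNy, dotProduct_smul, smul_eq_mul, smul_eq_mul,
    div_eq_mul_inv, mul_assoc]

theorem mul_le_trace_inv_sub_trace_inv_add_smul_vecMulVec {b t : ℝ} (hb : 0 < b) (ht : 0 ≤ t)
    {P : Matrix n n ℝ} (hP : P.PosSemidef) {y : n → ℝ} (hy : y ⬝ᵥ y = 1) :
    b / (b + t) * (t * (((b • 1 + P)⁻¹ *ᵥ y) ⬝ᵥ ((b • 1 + P)⁻¹ *ᵥ y))) ≤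
      (b • 1 + P)⁻¹.trace - (b • 1 + P + t • vecMulVec y y)⁻¹.trace := by
  have hM : (b • 1 + P).PosDef := (PosDef.one.smul hb).add_posSemidef hP
  rw [hM.trace_inv_sub_trace_inv_add_smul_vecMulVec ht, ← mul_assoc]
  have hq : 0 ≤ y ⬝ᵥ ((b • 1 + P)⁻¹ *ᵥ y) := by
    simpa using hM.inv.posSemidef.dotProduct_mulVec_nonneg y
  have hbq := mul_dotProduct_inv_smul_one_add_mulVec_le hb hP y
  rw [hy] at hbq
  gcongr
  · exact dotProduct_self_nonneg _
  · rw [div_mul_eq_mul_div, div_le_div_iff₀ (by positivity) (by positivity)]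
    nlinarith [mul_le_mul_of_nonneg_left hbq (mul_nonneg ht ht)]

theorem PosDef.trace_inv_sub_trace_inv_add_smul_sum_le {M : Matrix n n ℝ} (hM : M.PosDef)
    {t : ℝ} (ht : 0 ≤ t) {ι : Type*} (s : Finset ι) (y : ι → n → ℝ) :
    M⁻¹.trace - (M + t • ∑ i ∈ s, vecMulVec (y i) (y i))⁻¹.trace ≤
      t * ∑ i ∈ s, (M⁻¹ *ᵥ y i) ⬝ᵥ (M⁻¹ *ᵥ y i) := by
  refine (hM.trace_inv_sub_trace_inv_add_le
    (posSemidef_smul_sum_vecMulVec_self ht s y)).trans_eq ?_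
  rw [Matrix.mul_smul, Matrix.smul_mul, trace_smul, Matrix.mul_sum, Matrix.sum_mul, trace_sum,
    smul_eq_mul]
  simp only [trace_mul_vecMulVec_mul, hM.isHermitian.inv.vecMul_eq_mulVec]

end Matrix

section BayesA

variable {V : Type*} [DecidableEq V] {n : Type*} [DecidableEq n]

noncomputable def bayesPrecision (β σ : ℝ) (x : V → n → ℝ) (S : Finset V) : Matrix n n ℝ :=
  β ^ 2 • 1 + (σ ^ 2)⁻¹ • ∑ v ∈ S, vecMulVec (x v) (x v)

theorem bayesA_sub_bayesA (d : ℕ) (β σ : ℝ) (x : V → Fin d → ℝ) (S T : Finset V) :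
    bayesA d β σ x T - bayesA d β σ x S =
      (bayesPrecision β σ x S)⁻¹.trace - (bayesPrecision β σ x T)⁻¹.trace :=
  sub_sub_sub_cancel_left _ _ _

theorem bayesPrecision_insert (β σ : ℝ) (x : V → n → ℝ) {S : Finset V} {ω : V} (hω : ω ∉ S) :
    bayesPrecision β σ x (insert ω S) =
      bayesPrecision β σ x S + (σ ^ 2)⁻¹ • vecMulVec (x ω) (x ω) := by
  rw [bayesPrecision, bayesPrecision, sum_insert hω, smul_add, add_comm (_ • vecMulVec _ _),
    add_assoc]

theorem bayesPrecision_union (β σ : ℝ) (x : V → n → ℝ) (S Ω : Finset V) :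
    bayesPrecision β σ x (S ∪ Ω) =
      bayesPrecision β σ x S + (σ ^ 2)⁻¹ • ∑ v ∈ Ω \ S, vecMulVec (x v) (x v) := by
  rw [bayesPrecision, bayesPrecision, ← union_sdiff_self_eq_union, sum_union disjoint_sdiff,
    smul_add, add_assoc]

end BayesA

theorem bayesA_submodularity_ratio_general {V : Type*} [DecidableEq V] [Fintype V]
    (d : ℕ) (β σ c : ℝ) (hβ : 0 < β)
    (x : V → Fin d → ℝ)
    (hnorm : ∀ v : V, ∑ i, (x v i) ^ 2 = 1)
    (hbound : (c • (1 : Matrix (Fin d) (Fin d) ℝ) -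
      ∑ v ∈ Finset.univ, Matrix.vecMulVec (x v) (x v)).PosSemidef) :
    ∀ Ω S : Finset V,
      ∑ ω ∈ Ω \ S, (bayesA d β σ x (insert ω S) - bayesA d β σ x S) ≥
        (β ^ 2 / (c * (β ^ 2 + (σ ^ 2)⁻¹ * c))) *
          (bayesA d β σ x (S ∪ Ω) - bayesA d β σ x S) := by
  intro Ω S
  rcases (Ω \ S).eq_empty_or_nonempty with hempty | ⟨ω₀, hω₀⟩
  · simp [hempty, union_eq_left.mpr (sdiff_eq_empty_iff_subset.mp hempty)]
  have hunit (v : V) : x v ⬝ᵥ x v = 1 := by simpa [dotProduct, sq] using hnorm v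
  have hc : 1 ≤ c := by
    simpa [hunit] using sq_dotProduct_self_le_of_posSemidef_smul_one_sub hbound (mem_univ ω₀)
  set t := (σ ^ 2)⁻¹
  have ht : 0 ≤ t := by positivity
  set M := bayesPrecision β σ x S
  have hP := posSemidef_smul_sum_vecMulVec_self ht S x
  have hM : M.PosDef := (PosDef.one.smul (pow_pos hβ 2)).add_posSemidef hP
  set g := t * ∑ ω ∈ Ω \ S, (M⁻¹ *ᵥ x ω) ⬝ᵥ (M⁻¹ *ᵥ x ω)
  calc β ^ 2 / (c * (β ^ 2 + t * c)) * (bayesA d β σ x (S ∪ Ω) - bayesA d β σ x S)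
      ≤ β ^ 2 / (c * (β ^ 2 + t * c)) * g := by
        gcongr
        rw [bayesA_sub_bayesA, bayesPrecision_union]
        exact hM.trace_inv_sub_trace_inv_add_smul_sum_le ht _ _
    _ ≤ β ^ 2 / (β ^ 2 + t) * g := by
        gcongr
        · exact mul_nonneg ht (sum_nonneg fun ω _ => dotProduct_self_nonneg _)
        · nlinarith [mul_nonneg (sub_nonneg.mpr hc) (pow_pos hβ 2).le,
            mul_nonneg (mul_nonneg ht (sub_nonneg.mpr hc)) (by linarith : (0 : ℝ) ≤ c + 1)]
    _ = ∑ ω ∈ Ω \ S, β ^ 2 / (β ^ 2 + t) * (t * ((M⁻¹ *ᵥ x ω) ⬝ᵥ (M⁻¹ *ᵥ x ω))) := by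
        simp only [g, mul_sum]
    _ ≤ ∑ ω ∈ Ω \ S, (bayesA d β σ x (insert ω S) - bayesA d β σ x S) := by
        refine sum_le_sum fun ω hω => ?_
        rw [bayesA_sub_bayesA, bayesPrecision_insert _ _ _ (mem_sdiff.mp hω).2]
        exact mul_le_trace_inv_sub_trace_inv_add_smul_vecMulVec (pow_pos hβ 2) ht hP (hunit ω)

/-- **Submodularity-ratio bound for Bayesian A-optimality.** If the stimuli are
normalized (`‖x_v‖₂ = 1`) and `Σ_{v∈V} x_v x_vᵀ ⪯ c·I` with `c > 0`, then for
all `Ω, S ⊆ V`,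
`Σ_{ω∈Ω\S} ρ_ω(S) ≥ (β²/(c(β² + σ⁻²c)))·ρ_Ω(S)`, i.e. the submodularity ratio
of `F_A` is at least `β²/(c(β² + σ⁻²c))`. -/
theorem bayesA_submodularity_ratio {V : Type*} [DecidableEq V] [Fintype V]
    (d : ℕ) (β σ c : ℝ) (hβ : 0 < β) (hσ : 0 < σ) (hc : 0 < c)
    (x : V → Fin d → ℝ)
    (hnorm : ∀ v : V, ∑ i, (x v i) ^ 2 = 1)
    (hbound : (c • (1 : Matrix (Fin d) (Fin d) ℝ) -
      ∑ v ∈ Finset.univ, Matrix.vecMulVec (x v) (x v)).PosSemidef) :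
    ∀ Ω S : Finset V,
      ∑ ω ∈ Ω \ S, (bayesA d β σ x (insert ω S) - bayesA d β σ x S) ≥
        (β ^ 2 / (c * (β ^ 2 + (σ ^ 2)⁻¹ * c))) *
          (bayesA d β σ x (S ∪ Ω) - bayesA d β σ x S) :=
  bayesA_submodularity_ratio_general d β σ c hβ x hnorm hbound
end

section
/- Let β, σ > 0, let V be a finite index set, and for each v ∈ V let x_v ∈ ℝ^d with ‖x_v‖₂ = 1. Let c > 0 be such that Σ_{v∈V} x_v x_vᵀ ⪯ c·I_d. Define F_A(S) := tr((β²·I_d)^{−1}) − tr((β²·I_d + σ^{−2}·Σ_{v∈S} x_v x_vᵀ)^{−1}) for S ⊆ V. Then for all Ω, S ⊆ V and every i ∈ S\Ω: F_A(S ∪ Ω) − F_A((S\{i}) ∪ Ω) ≥ (β² / (c·(β² + σ^{−2}c)))·(F_A(S) − F_A(S\{i})); that is, the generalized curvature of F_A is at most 1 − β²/(c(β² + σ^{−2}c)). -/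
/-!
Write `P_T = β²I + σ⁻²·Σ_{v∈T} x_v x_vᵀ` and `y = σ⁻¹x_i`. By Sherman–Morrison the marginal gain
of `i` at `T ∌ i` is `|P_T⁻¹y|² / (1 + yᵀP_T⁻¹y)`. Since `P_T ⪰ β²I`, this gain is at most
`s / (β²(β² + s))` with `s = |y|² = σ⁻²`. On the other hand `Σ_V x_v x_vᵀ ⪯ cI` leaves at most
`c - 1` of the quadratic form at `x_i` to the `v ≠ i`, so `yᵀP_T y ≤ m|y|²` with
`m = β² + σ⁻²(c - 1)`, and two Cauchy–Schwarz inequalities turn this into the lower bound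
`s / (m(m + s))` for the gain. Comparing the upper bound at `S \ {i}` with the lower bound at
`(S \ {i}) ∪ Ω` gives the curvature ratio.
-/

open Finset Matrix

namespace Matrix

variable {n : Type*} [Fintype n]

theorem posSemidef_vecMulVec_self (y : n → ℝ) : (vecMulVec y y).PosSemidef := by
  simpa using posSemidef_vecMulVec_self_star y

theorem dotProduct_sum_vecMulVec_mulVec {ι : Type*} (s : Finset ι) (x : ι → n → ℝ)
    (u : n → ℝ) :
    u ⬝ᵥ ((∑ v ∈ s, vecMulVec (x v) (x v)) *ᵥ u) = ∑ v ∈ s, (x v ⬝ᵥ u) ^ 2 := by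
  simp [sum_mulVec, sum_dotProduct, vecMulVec_mulVec, dotProduct_comm u, sq]

theorem PosSemidef.dotProduct_mulVec_sq_le {M : Matrix n n ℝ} (hM : M.PosSemidef)
    (a b : n → ℝ) :
    (a ⬝ᵥ (M *ᵥ b)) ^ 2 ≤ (a ⬝ᵥ (M *ᵥ a)) * (b ⬝ᵥ (M *ᵥ b)) := by
  have hsymm : b ⬝ᵥ (M *ᵥ a) = a ⬝ᵥ (M *ᵥ b) := by
    rw [dotProduct_mulVec, ← mulVec_transpose, dotProduct_comm,
      ← conjTranspose_eq_transpose_of_trivial, hM.isHermitian.eq]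
  have hquad : ∀ t : ℝ,
      0 ≤ (b ⬝ᵥ (M *ᵥ b)) * (t * t) + 2 * (a ⬝ᵥ (M *ᵥ b)) * t + a ⬝ᵥ (M *ᵥ a) := by
    intro t
    have := hM.dotProduct_mulVec_nonneg (a + t • b)
    simp only [star_trivial, mulVec_add, mulVec_smul, dotProduct_add, add_dotProduct,
      dotProduct_smul, smul_dotProduct, smul_eq_mul, hsymm] at this
    linarith
  have := discrim_le_zero hquad
  rw [discrim] at this
  linarith

variable [DecidableEq n]

theorem inv_add_vecMulVec {K : Type*} [Field K] {P : Matrix n n K} (hP : IsUnit P.det)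
    (u v : n → K) (hq : 1 + v ⬝ᵥ (P⁻¹ *ᵥ u) ≠ 0) :
    (P + vecMulVec u v)⁻¹ =
      P⁻¹ - (1 + v ⬝ᵥ (P⁻¹ *ᵥ u))⁻¹ • vecMulVec (P⁻¹ *ᵥ u) (v ᵥ* P⁻¹) := by
  refine inv_eq_right_inv ?_
  have hPw : P *ᵥ (P⁻¹ *ᵥ u) = u := by rw [mulVec_mulVec, mul_nonsing_inv _ hP, one_mulVec]
  rw [add_mul, mul_sub, mul_sub, mul_nonsing_inv _ hP, mul_smul_comm, mul_smul_comm,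
    mul_vecMulVec, hPw, vecMulVec_mul, vecMulVec_mul_vecMulVec, vecMulVec_smul, smul_smul]
  generalize v ⬝ᵥ (P⁻¹ *ᵥ u) = q at hq ⊢
  have hcoeff : 1 - (1 + q)⁻¹ - (1 + q)⁻¹ * q = 0 := by field_simp; ring
  calc _ = 1 + (1 - (1 + q)⁻¹ - (1 + q)⁻¹ * q) • vecMulVec u (v ᵥ* P⁻¹) := by module
    _ = 1 := by rw [hcoeff, zero_smul, add_zero]

theorem sum_sq_dotProduct_le_of_posSemidef {ι : Type*} {s : Finset ι} {x : ι → n → ℝ}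
    {c : ℝ} (h : (c • 1 - ∑ v ∈ s, vecMulVec (x v) (x v)).PosSemidef)
    (u : n → ℝ) : ∑ v ∈ s, (x v ⬝ᵥ u) ^ 2 ≤ c * (u ⬝ᵥ u) := by
  have := h.dotProduct_mulVec_nonneg u
  rw [star_trivial, sub_mulVec, dotProduct_sub, dotProduct_sum_vecMulVec_mulVec, smul_mulVec,
    one_mulVec, dotProduct_smul, smul_eq_mul] at this
  linarith

theorem trace_inv_sub_trace_inv_add_vecMulVec {P : Matrix n n ℝ} (hP : P.PosDef) (y : n → ℝ) :
    trace P⁻¹ - trace (P + vecMulVec y y)⁻¹ =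
      (P⁻¹ *ᵥ y) ⬝ᵥ (P⁻¹ *ᵥ y) / (1 + y ⬝ᵥ (P⁻¹ *ᵥ y)) := by
  have hq : 0 ≤ y ⬝ᵥ (P⁻¹ *ᵥ y) := by
    simpa using hP.inv.posSemidef.dotProduct_mulVec_nonneg y
  have hsymm : y ᵥ* P⁻¹ = P⁻¹ *ᵥ y := by
    rw [← mulVec_transpose, ← conjTranspose_eq_transpose_of_trivial, hP.inv.isHermitian.eq]
  rw [inv_add_vecMulVec hP.det_pos.ne'.isUnit y y (by positivity), trace_sub, trace_smul,
    trace_vecMulVec, hsymm, smul_eq_mul, sub_sub_cancel, div_eq_inv_mul]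

theorem trace_inv_sub_trace_inv_add_vecMulVec_le {P : Matrix n n ℝ} {a : ℝ} (ha : 0 < a)
    (hP : (P - a • 1).PosSemidef) (y : n → ℝ) :
    trace P⁻¹ - trace (P + vecMulVec y y)⁻¹ ≤ y ⬝ᵥ y / (a * (a + y ⬝ᵥ y)) := by
  have hPpd : P.PosDef := by simpa using (PosDef.one.smul ha).add_posSemidef hP
  have hq : 0 ≤ y ⬝ᵥ (P⁻¹ *ᵥ y) := by
    simpa using hPpd.inv.posSemidef.dotProduct_mulVec_nonneg y
  have hs : 0 ≤ y ⬝ᵥ y := dotProduct_self_star_nonneg y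
  rw [trace_inv_sub_trace_inv_add_vecMulVec hPpd,
    div_le_div_iff₀ (by linarith) (mul_pos ha (by linarith))]
  set w := P⁻¹ *ᵥ y
  set g := (P - a • 1) *ᵥ w with hg
  have hy : y = g + a • w := by
    rw [hg, sub_mulVec, smul_mulVec, one_mulVec, sub_add_cancel, mulVec_mulVec,
      mul_nonsing_inv _ hPpd.det_pos.ne'.isUnit, one_mulVec]
  have hwg : 0 ≤ w ⬝ᵥ g := by simpa using hP.dotProduct_mulVec_nonneg w
  have hgg : 0 ≤ g ⬝ᵥ g := dotProduct_self_star_nonneg g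
  have hww : 0 ≤ w ⬝ᵥ w := dotProduct_self_star_nonneg w
  have hyw : y ⬝ᵥ w = w ⬝ᵥ g + a * (w ⬝ᵥ w) := by
    rw [hy, add_dotProduct, smul_dotProduct, smul_eq_mul, dotProduct_comm]
  have hyy : y ⬝ᵥ y = g ⬝ᵥ g + 2 * a * (w ⬝ᵥ g) + a ^ 2 * (w ⬝ᵥ w) := by
    rw [hy]
    simp only [add_dotProduct, dotProduct_add, smul_dotProduct, dotProduct_smul, smul_eq_mul,
      dotProduct_comm g w]
    ring
  rw [hyw, hyy]
  nlinarith [mul_nonneg hwg hgg, mul_nonneg hwg hww, mul_nonneg hwg hwg]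

theorem le_trace_inv_sub_trace_inv_add_vecMulVec {P : Matrix n n ℝ} (hP : P.PosDef) {m : ℝ}
    (hm : 0 < m) (y : n → ℝ) (hy : y ⬝ᵥ (P *ᵥ y) ≤ m * (y ⬝ᵥ y)) :
    y ⬝ᵥ y / (m * (m + y ⬝ᵥ y)) ≤ trace P⁻¹ - trace (P + vecMulVec y y)⁻¹ := by
  set z := P⁻¹ *ᵥ y
  have hPz : P *ᵥ z = y := by
    rw [mulVec_mulVec, mul_nonsing_inv _ hP.det_pos.ne'.isUnit, one_mulVec]
  have hq : 0 ≤ y ⬝ᵥ z := by simpa using hP.inv.posSemidef.dotProduct_mulVec_nonneg y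
  have hs : 0 ≤ y ⬝ᵥ y := dotProduct_self_star_nonneg y
  have hzz : 0 ≤ z ⬝ᵥ z := dotProduct_self_star_nonneg z
  have hCS₁ : (y ⬝ᵥ y) ^ 2 ≤ (y ⬝ᵥ (P *ᵥ y)) * (y ⬝ᵥ z) := by
    simpa [hPz, dotProduct_comm z y] using hP.posSemidef.dotProduct_mulVec_sq_le y z
  have hCS₂ : (y ⬝ᵥ z) ^ 2 ≤ (y ⬝ᵥ y) * (z ⬝ᵥ z) := by
    simpa using PosSemidef.one.dotProduct_mulVec_sq_le y z
  rw [trace_inv_sub_trace_inv_add_vecMulVec hP,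
    div_le_div_iff₀ (mul_pos hm (by linarith)) (by linarith)]
  rcases hs.eq_or_lt with hs0 | hspos
  · rw [← hs0, zero_mul]
    exact mul_nonneg hzz (by positivity)
  have hsq : y ⬝ᵥ y ≤ m * (y ⬝ᵥ z) := by nlinarith
  have hqz : y ⬝ᵥ z ≤ m * (z ⬝ᵥ z) := by nlinarith
  nlinarith

end Matrix

section BayesA

variable {V : Type*} (d : ℕ) (β σ : ℝ) (x : V → Fin d → ℝ)

noncomputable def posteriorPrecision (S : Finset V) : Matrix (Fin d) (Fin d) ℝ :=
  β ^ 2 • 1 + (σ ^ 2)⁻¹ • ∑ v ∈ S, vecMulVec (x v) (x v)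

theorem bayesA_eq [DecidableEq V] (S : Finset V) :
    bayesA d β σ x S = trace (β ^ 2 • 1 : Matrix (Fin d) (Fin d) ℝ)⁻¹ -
      trace (posteriorPrecision d β σ x S)⁻¹ := rfl

theorem posSemidef_posteriorPrecision_sub (S : Finset V) :
    (posteriorPrecision d β σ x S - β ^ 2 • 1).PosSemidef := by
  rw [posteriorPrecision, add_sub_cancel_left]
  exact (posSemidef_sum S fun v _ => posSemidef_vecMulVec_self (x v)).smul (by positivity)

variable {d β σ x}

theorem posDef_posteriorPrecision (hβ : β ≠ 0) (S : Finset V) :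
    (posteriorPrecision d β σ x S).PosDef := by
  simpa using (PosDef.one.smul (by positivity : 0 < β ^ 2)).add_posSemidef
    (posSemidef_posteriorPrecision_sub d β σ x S)

theorem posteriorPrecision_insert [DecidableEq V] {S : Finset V} {i : V} (hi : i ∉ S) :
    posteriorPrecision d β σ x (insert i S) =
      posteriorPrecision d β σ x S + vecMulVec (σ⁻¹ • x i) (σ⁻¹ • x i) := by
  rw [posteriorPrecision, posteriorPrecision, sum_insert hi, smul_add, add_assoc,
    smul_vecMulVec, vecMulVec_smul, smul_smul, ← mul_inv, ← sq]
  abel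

theorem bayesA_insert_sub [DecidableEq V] {S : Finset V} {i : V} (hi : i ∉ S) :
    bayesA d β σ x (insert i S) - bayesA d β σ x S =
      trace (posteriorPrecision d β σ x S)⁻¹ -
        trace (posteriorPrecision d β σ x S + vecMulVec (σ⁻¹ • x i) (σ⁻¹ • x i))⁻¹ := by
  rw [bayesA_eq, bayesA_eq, posteriorPrecision_insert hi]
  ring

theorem bayesA_insert_sub_le [DecidableEq V] (hβ : β ≠ 0) {S : Finset V} {i : V}
    (hi : i ∉ S) (hx : x i ⬝ᵥ x i = 1) :
    bayesA d β σ x (insert i S) - bayesA d β σ x S ≤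
      (σ ^ 2)⁻¹ / (β ^ 2 * (β ^ 2 + (σ ^ 2)⁻¹)) := by
  have hy : (σ⁻¹ • x i) ⬝ᵥ (σ⁻¹ • x i) = (σ ^ 2)⁻¹ := by simp [hx, sq]
  rw [bayesA_insert_sub hi, ← hy]
  exact trace_inv_sub_trace_inv_add_vecMulVec_le (by positivity)
    (posSemidef_posteriorPrecision_sub d β σ x S) _

theorem le_bayesA_insert_sub [DecidableEq V] (hβ : β ≠ 0) {S : Finset V} {i : V}
    (hi : i ∉ S) (hx : x i ⬝ᵥ x i = 1) {c : ℝ}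
    (hc : ∑ v ∈ insert i S, (x v ⬝ᵥ x i) ^ 2 ≤ c) :
    (σ ^ 2)⁻¹ / ((β ^ 2 + (σ ^ 2)⁻¹ * (c - 1)) * (β ^ 2 + (σ ^ 2)⁻¹ * c)) ≤
      bayesA d β σ x (insert i S) - bayesA d β σ x S := by
  rw [sum_insert hi, hx, one_pow] at hc
  have hc₁ : 1 ≤ c := by linarith [sum_nonneg fun v (_ : v ∈ S) => sq_nonneg (x v ⬝ᵥ x i)]
  have hm : 0 < β ^ 2 + (σ ^ 2)⁻¹ * (c - 1) := by
    have : 0 ≤ (σ ^ 2)⁻¹ * (c - 1) := mul_nonneg (by positivity) (by linarith)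
    positivity
  have hy : (σ⁻¹ • x i) ⬝ᵥ (σ⁻¹ • x i) = (σ ^ 2)⁻¹ := by simp [hx, sq]
  have hPy : (σ⁻¹ • x i) ⬝ᵥ (posteriorPrecision d β σ x S *ᵥ (σ⁻¹ • x i)) ≤
      (β ^ 2 + (σ ^ 2)⁻¹ * (c - 1)) * ((σ⁻¹ • x i) ⬝ᵥ (σ⁻¹ • x i)) := by
    have key : (σ ^ 2)⁻¹ * ((σ ^ 2)⁻¹ * ∑ v ∈ S, (x v ⬝ᵥ x i) ^ 2) ≤
        (σ ^ 2)⁻¹ * ((σ ^ 2)⁻¹ * (c - 1)) := by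
      gcongr
      linarith
    simp only [posteriorPrecision, add_mulVec, smul_mulVec, mulVec_smul, one_mulVec,
      dotProduct_add, dotProduct_smul, smul_dotProduct, dotProduct_sum_vecMulVec_mulVec,
      smul_eq_mul, hx]
    linear_combination key
  have := le_trace_inv_sub_trace_inv_add_vecMulVec (posDef_posteriorPrecision hβ S) hm _ hPy
  rw [hy] at this
  rw [bayesA_insert_sub hi]
  convert this using 3
  ring

end BayesA

theorem bayesA_curvature_general {V : Type*} [DecidableEq V] [Fintype V]
    (d : ℕ) (β σ c : ℝ) (hβ : 0 < β)
    (x : V → Fin d → ℝ)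
    (hnorm : ∀ v : V, ∑ i, (x v i) ^ 2 = 1)
    (hbound : (c • (1 : Matrix (Fin d) (Fin d) ℝ) -
      ∑ v ∈ Finset.univ, Matrix.vecMulVec (x v) (x v)).PosSemidef) :
    ∀ Ω S : Finset V, ∀ i ∈ S, i ∉ Ω →
      bayesA d β σ x (S ∪ Ω) - bayesA d β σ x ((S.erase i) ∪ Ω) ≥
        (β ^ 2 / (c * (β ^ 2 + (σ ^ 2)⁻¹ * c))) *
          (bayesA d β σ x S - bayesA d β σ x (S.erase i)) := by
  intro Ω S i hiS hiΩ
  have hx : x i ⬝ᵥ x i = 1 := by simpa [dotProduct, sq] using hnorm i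
  have hsum : ∑ v ∈ insert i (S.erase i ∪ Ω), (x v ⬝ᵥ x i) ^ 2 ≤ c :=
    calc _ ≤ ∑ v, (x v ⬝ᵥ x i) ^ 2 := sum_le_univ_sum_of_nonneg fun _ => sq_nonneg _
      _ ≤ c * (x i ⬝ᵥ x i) := sum_sq_dotProduct_le_of_posSemidef hbound _
      _ = c := by rw [hx, mul_one]
  have hc : 1 ≤ c := by
    simpa [hx] using
      (single_le_sum (fun v _ => sq_nonneg (x v ⬝ᵥ x i)) (mem_insert_self i _)).trans hsum
  have hsmall := bayesA_insert_sub_le (σ := σ) hβ.ne' (notMem_erase i S) hx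
  have hlarge := le_bayesA_insert_sub (σ := σ) hβ.ne' (by simp [hiΩ]) hx hsum
  rw [insert_erase hiS] at hsmall
  rw [← insert_union, insert_erase hiS] at hlarge
  set s := (σ ^ 2)⁻¹
  have hs : 0 ≤ s := by positivity
  calc β ^ 2 / (c * (β ^ 2 + s * c)) * (bayesA d β σ x S - bayesA d β σ x (S.erase i))
      ≤ β ^ 2 / (c * (β ^ 2 + s * c)) * (s / (β ^ 2 * (β ^ 2 + s))) := by gcongr
    _ = s / (c * (β ^ 2 + s) * (β ^ 2 + s * c)) := by field_simp
    _ ≤ s / ((β ^ 2 + s * (c - 1)) * (β ^ 2 + s * c)) := by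
      gcongr
      nlinarith
    _ ≤ _ := hlarge

/-- **Curvature bound for Bayesian A-optimality.** If the stimuli are normalized
(`‖x_v‖₂ = 1`) and `Σ_{v∈V} x_v x_vᵀ ⪯ c·I` with `c > 0`, then for all
`Ω, S ⊆ V` and `i ∈ S\Ω`,
`F_A(S ∪ Ω) − F_A((S\{i}) ∪ Ω) ≥ (β²/(c(β² + σ⁻²c)))·(F_A(S) − F_A(S\{i}))`,
i.e. the generalized curvature of `F_A` is at most `1 − β²/(c(β² + σ⁻²c))`. -/
theorem bayesA_curvature {V : Type*} [DecidableEq V] [Fintype V]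
    (d : ℕ) (β σ c : ℝ) (hβ : 0 < β) (hσ : 0 < σ) (hc : 0 < c)
    (x : V → Fin d → ℝ)
    (hnorm : ∀ v : V, ∑ i, (x v i) ^ 2 = 1)
    (hbound : (c • (1 : Matrix (Fin d) (Fin d) ℝ) -
      ∑ v ∈ Finset.univ, Matrix.vecMulVec (x v) (x v)).PosSemidef) :
    ∀ Ω S : Finset V, ∀ i ∈ S, i ∉ Ω →
      bayesA d β σ x (S ∪ Ω) - bayesA d β σ x ((S.erase i) ∪ Ω) ≥
        (β ^ 2 / (c * (β ^ 2 + (σ ^ 2)⁻¹ * c))) *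
          (bayesA d β σ x S - bayesA d β σ x (S.erase i)) :=
  bayesA_curvature_general d β σ c hβ x hnorm hbound
end

section
/- Let B and D be real symmetric d×d matrices with B positive definite, D positive semidefinite, and let M > 0 satisfy B ⪯ M·I_d and B + D ⪯ M·I_d. Then tr(B^{−1}) − tr((B + D)^{−1}) ≥ tr(D)/M². -/
/-!
With `S = B + D`, the resolvent identity gives
`B⁻¹ - S⁻¹ = S⁻¹ D S⁻¹ + (S⁻¹ D) B⁻¹ (D S⁻¹)`, and the second term is positive semidefinite.
Conjugating `S ⪯ M • 1` by `S^{-1/2}` gives `M⁻¹ • 1 ⪯ S⁻¹`; writing `S⁻¹ = M⁻¹ • 1 + E` with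
`E ⪰ 0` then expands `tr (S⁻¹ D S⁻¹)` as `M⁻² tr D` plus traces of products of positive
semidefinite matrices, which are nonnegative.
-/

open Matrix
open scoped MatrixOrder ComplexOrder

namespace Matrix

variable {n : Type*} [Fintype n] [DecidableEq n]

theorem inv_sub_inv_add {α : Type*} [CommRing α] {B D : Matrix n n α} (hB : IsUnit B)
    (hBD : IsUnit (B + D)) :
    B⁻¹ - (B + D)⁻¹ = (B + D)⁻¹ * D * (B + D)⁻¹ + (B + D)⁻¹ * D * B⁻¹ * D * (B + D)⁻¹ := by
  have hunit : IsUnit B ↔ IsUnit (B + D) := iff_of_true hB hBD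
  have right : B⁻¹ - (B + D)⁻¹ = (B + D)⁻¹ * D * B⁻¹ := by
    rw [← neg_sub, inv_sub_inv hunit.symm, sub_add_cancel_left]; noncomm_ring
  calc B⁻¹ - (B + D)⁻¹ = B⁻¹ * D * (B + D)⁻¹ := by rw [inv_sub_inv hunit, add_sub_cancel_left]
    _ = (B + D)⁻¹ * D * (B + D)⁻¹ + (B⁻¹ - (B + D)⁻¹) * D * (B + D)⁻¹ := by noncomm_ring
    _ = _ := by rw [right]

variable {𝕜 : Type*} [RCLike 𝕜]

theorem PosSemidef.trace_mul_nonneg {A B : Matrix n n 𝕜} (hA : A.PosSemidef)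
    (hB : B.PosSemidef) : 0 ≤ (A * B).trace := by
  set T := CFC.sqrt B
  have hT : IsSelfAdjoint T := .of_nonneg (CFC.sqrt_nonneg B)
  have h : (A * B).trace = (star T * A * T).trace := by
    rw [← CFC.sqrt_mul_sqrt_self B hB.nonneg, hT.star_eq, ← mul_assoc, trace_mul_cycle]
  rw [h]
  exact (star_left_conjugate_nonneg hA.nonneg T).posSemidef.trace_nonneg

theorem PosDef.inv_smul_one_le_inv {S : Matrix n n 𝕜} (hS : S.PosDef) {M : ℝ} (hM : 0 < M)
    (h : S ≤ M • 1) : M⁻¹ • (1 : Matrix n n 𝕜) ≤ S⁻¹ := by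
  set T := CFC.sqrt S
  have hTT : T * T = S := CFC.sqrt_mul_sqrt_self S hS.posSemidef.nonneg
  have hT : IsUnit T.det :=
    (isUnit_iff_isUnit_det T).mp (isUnit_of_mul_isUnit_left (hTT ▸ hS.isUnit))
  have hTinv : IsSelfAdjoint T⁻¹ :=
    (nonneg_iff_posSemidef.mp (CFC.sqrt_nonneg S)).isHermitian.inv
  have key := star_left_conjugate_le_conjugate h T⁻¹
  rw [hTinv.star_eq, ← hTT, mul_smul_comm, smul_mul_assoc, mul_one, ← mul_inv_rev,
    mul_assoc, mul_assoc, mul_nonsing_inv _ hT, mul_one, nonsing_inv_mul _ hT] at key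
  calc M⁻¹ • (1 : Matrix n n 𝕜) ≤ M⁻¹ • M • (T * T)⁻¹ :=
        smul_le_smul_of_nonneg_left key (inv_nonneg.mpr hM.le)
    _ = S⁻¹ := by rw [smul_smul, inv_mul_cancel₀ hM.ne', one_smul, hTT]

theorem sq_mul_trace_le_trace_mul_mul {C D : Matrix n n ℝ} {m : ℝ} (hm : 0 ≤ m)
    (hC : m • 1 ≤ C) (hD : D.PosSemidef) : m ^ 2 * D.trace ≤ (C * D * C).trace := by
  obtain ⟨E, hE, rfl⟩ : ∃ E : Matrix n n ℝ, E.PosSemidef ∧ C = E + m • 1 :=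
    ⟨C - m • 1, hC, (sub_add_cancel C _).symm⟩
  have expand :
      (E + m • 1) * D * (E + m • 1) = star E * D * E + m • (E * D + D * E) + m ^ 2 • D := by
    rw [hE.isHermitian.star_eq]
    simp only [add_mul, mul_add, smul_mul_assoc, mul_smul_comm, one_mul, mul_one, smul_add,
      smul_smul]
    module
  have hED : 0 ≤ (E * D).trace := hE.trace_mul_nonneg hD
  have hEDE : 0 ≤ (star E * D * E).trace :=
    (star_left_conjugate_nonneg hD.nonneg E).posSemidef.trace_nonneg
  rw [expand, trace_add, trace_add, trace_smul, trace_smul, trace_add, trace_mul_comm D E,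
    smul_eq_mul, smul_eq_mul]
  nlinarith

end Matrix

theorem trace_inv_sub_trace_inv_ge_general (d : ℕ) (B D : Matrix (Fin d) (Fin d) ℝ)
    (hB : B.PosDef) (hD : D.PosSemidef) (M : ℝ) (hM : 0 < M)
    (hBDM : (M • (1 : Matrix (Fin d) (Fin d) ℝ) - (B + D)).PosSemidef) :
    Matrix.trace B⁻¹ - Matrix.trace (B + D)⁻¹ ≥ Matrix.trace D / M ^ 2 := by
  have hS : (B + D).PosDef := hB.add_posSemidef hD
  have hfirst : (M⁻¹) ^ 2 * D.trace ≤ ((B + D)⁻¹ * D * (B + D)⁻¹).trace :=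
    sq_mul_trace_le_trace_mul_mul (inv_nonneg.mpr hM.le) (hS.inv_smul_one_le_inv hM hBDM) hD
  have hsecond : 0 ≤ ((B + D)⁻¹ * D * B⁻¹ * D * (B + D)⁻¹).trace := by
    have h := star_left_conjugate_nonneg hB.inv.posSemidef.nonneg (D * (B + D)⁻¹)
    rw [star_mul, hS.inv.isHermitian.star_eq, hD.isHermitian.star_eq, ← mul_assoc] at h
    exact h.posSemidef.trace_nonneg
  rw [← trace_sub, inv_sub_inv_add hB.isUnit hS.isUnit, trace_add, ge_iff_le, div_eq_mul_inv,
    mul_comm, ← inv_pow]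
  linarith

/-- **Trace lower bound for PSD perturbations.** If `B` is positive definite,
`D` is positive semidefinite, and `B ⪯ M·I`, `B + D ⪯ M·I` for some `M > 0`,
then `tr(B⁻¹) − tr((B + D)⁻¹) ≥ tr(D)/M²`. -/
theorem trace_inv_sub_trace_inv_ge (d : ℕ) (B D : Matrix (Fin d) (Fin d) ℝ)
    (hB : B.PosDef) (hD : D.PosSemidef) (M : ℝ) (hM : 0 < M)
    (hBM : (M • (1 : Matrix (Fin d) (Fin d) ℝ) - B).PosSemidef)
    (hBDM : (M • (1 : Matrix (Fin d) (Fin d) ℝ) - (B + D)).PosSemidef) :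
    Matrix.trace B⁻¹ - Matrix.trace (B + D)⁻¹ ≥ Matrix.trace D / M ^ 2 :=
  trace_inv_sub_trace_inv_ge_general d B D hB hD M hM hBDM
end

section
/- Let B and D be real symmetric d×d matrices with β²·I_d ⪯ B for some β > 0, D positive semidefinite of rank at most r, and B + D ⪯ M·I_d for some M ≥ β². Then tr(B^{−1}) − tr((B + D)^{−1}) ≤ r·(1/β² − 1/M). -/
/-!
`B⁻¹ − (B + D)⁻¹ = B⁻¹ D (B + D)⁻¹` has rank at most `rank D ≤ r`, and in the Loewner order it
lies below `(1/β² − 1/M)·I`, because `B⁻¹ ⪯ β⁻²·I` and `(B + D)⁻¹ ⪰ M⁻¹·I` by the functional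
calculus. A Hermitian matrix below `c·I` has at most `rank` nonzero eigenvalues, each at most `c`,
so its trace is at most `rank · c`.
-/

open Matrix
open scoped MatrixOrder ComplexOrder

namespace Matrix

variable {n : Type*} [Fintype n] [DecidableEq n]

theorem rank_inv_sub_inv_add_le {R : Type*} [CommRing R] [StrongRankCondition R]
    {A D : Matrix n n R} (h : IsUnit A ↔ IsUnit (A + D)) :
    (A⁻¹ - (A + D)⁻¹).rank ≤ D.rank := by
  rw [inv_sub_inv h, add_sub_cancel_left]
  exact (rank_mul_le_left _ _).trans (rank_mul_le_right _ _)

variable {𝕜 : Type*} [RCLike 𝕜]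

theorem IsHermitian.eigenvalues_le_of_le_smul_one {A : Matrix n n 𝕜} (hA : A.IsHermitian)
    {c : ℝ} (h : A ≤ c • 1) (i : n) : hA.eigenvalues i ≤ c := by
  rw [← Algebra.algebraMap_eq_smul_one, le_algebraMap_iff_spectrum_le hA.isSelfAdjoint] at h
  exact h _ (hA.eigenvalues_mem_spectrum_real i)

theorem IsHermitian.sum_eigenvalues_le_rank_mul {A : Matrix n n 𝕜} (hA : A.IsHermitian)
    {c : ℝ} (h : A ≤ c • 1) : ∑ i, hA.eigenvalues i ≤ A.rank * c := by
  rw [← Finset.sum_filter_ne_zero, hA.rank_eq_card_non_zero_eigs, Fintype.card_subtype,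
    ← nsmul_eq_mul]
  exact Finset.sum_le_card_nsmul _ _ _ fun i _ ↦ hA.eigenvalues_le_of_le_smul_one h i

theorem IsHermitian.trace_le_rank_mul {A : Matrix n n ℝ} (hA : A.IsHermitian) {c : ℝ}
    (h : A ≤ c • 1) : A.trace ≤ A.rank * c := by
  simpa [hA.trace_eq_sum_eigenvalues] using hA.sum_eigenvalues_le_rank_mul h

namespace PosDef

theorem inv_eq_cfc {A : Matrix n n 𝕜} (hA : A.PosDef) : A⁻¹ = cfc (·⁻¹ : ℝ → ℝ) A := by
  rw [cfc_ringInverse_id A hA.isUnit hA.isHermitian.isSelfAdjoint, nonsing_inv_eq_ringInverse]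

theorem inv_le_smul_one {A : Matrix n n 𝕜} (hA : A.PosDef) {c : ℝ} (hc : 0 < c)
    (h : c • 1 ≤ A) : A⁻¹ ≤ c⁻¹ • 1 := by
  rw [← Algebra.algebraMap_eq_smul_one, algebraMap_le_iff_le_spectrum hA.isHermitian.isSelfAdjoint]
    at h
  rw [hA.inv_eq_cfc, ← Algebra.algebraMap_eq_smul_one]
  exact cfc_le_algebraMap _ _ _ (fun x hx ↦ inv_anti₀ hc (h x hx))
    (continuousOn_inv₀.mono fun x hx ↦ (hc.trans_le (h x hx)).ne')
    hA.isHermitian.isSelfAdjoint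

theorem smul_one_le_inv {A : Matrix n n 𝕜} (hA : A.PosDef) {c : ℝ} (h : A ≤ c • 1) :
    c⁻¹ • 1 ≤ A⁻¹ := by
  have hpos : ∀ x ∈ spectrum ℝ A, 0 < x :=
    (StarOrderedRing.isStrictlyPositive_iff_spectrum_pos A hA.isHermitian.isSelfAdjoint).mp
      hA.isStrictlyPositive
  rw [← Algebra.algebraMap_eq_smul_one, le_algebraMap_iff_spectrum_le hA.isHermitian.isSelfAdjoint]
    at h
  rw [hA.inv_eq_cfc, ← Algebra.algebraMap_eq_smul_one]
  exact algebraMap_le_cfc _ _ _ (fun x hx ↦ inv_anti₀ (hpos x hx) (h x hx))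
    (continuousOn_inv₀.mono fun x hx ↦ (hpos x hx).ne') hA.isHermitian.isSelfAdjoint

end PosDef

end Matrix

/-- **Trace upper bound for low-rank PSD perturbations.** If `β²·I ⪯ B` with
`β > 0`, `D` is positive semidefinite of rank at most `r`, and `B + D ⪯ M·I`
with `M ≥ β²`, then `tr(B⁻¹) − tr((B + D)⁻¹) ≤ r·(1/β² − 1/M)`. -/
theorem trace_inv_sub_trace_inv_le (d : ℕ) (B D : Matrix (Fin d) (Fin d) ℝ)
    (β : ℝ) (hβ : 0 < β)
    (hB : (B - β ^ 2 • (1 : Matrix (Fin d) (Fin d) ℝ)).PosSemidef)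
    (hD : D.PosSemidef) (r : ℕ) (hr : D.rank ≤ r)
    (M : ℝ) (hM : β ^ 2 ≤ M)
    (hBDM : (M • (1 : Matrix (Fin d) (Fin d) ℝ) - (B + D)).PosSemidef) :
    Matrix.trace B⁻¹ - Matrix.trace (B + D)⁻¹ ≤ (r : ℝ) * (1 / β ^ 2 - 1 / M) := by
  have hβ2 : 0 < β ^ 2 := by positivity
  have hBpos : B.PosDef := by simpa using (PosDef.one.smul hβ2).add_posSemidef hB
  have hBDpos : (B + D).PosDef := hBpos.add_posSemidef hD
  have hΔ : B⁻¹ - (B + D)⁻¹ ≤ (1 / β ^ 2 - 1 / M) • 1 := by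
    rw [sub_smul, one_div, one_div]
    exact sub_le_sub (hBpos.inv_le_smul_one hβ2 hB) (hBDpos.smul_one_le_inv hBDM)
  have hrank : (B⁻¹ - (B + D)⁻¹).rank ≤ r :=
    (rank_inv_sub_inv_add_le (iff_of_true hBpos.isUnit hBDpos.isUnit)).trans hr
  calc B⁻¹.trace - (B + D)⁻¹.trace = (B⁻¹ - (B + D)⁻¹).trace := (trace_sub _ _).symm
    _ ≤ (B⁻¹ - (B + D)⁻¹).rank * (1 / β ^ 2 - 1 / M) :=
      (hBpos.inv.isHermitian.sub hBDpos.inv.isHermitian).trace_le_rank_mul hΔ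
    _ ≤ r * (1 / β ^ 2 - 1 / M) := by
      gcongr
      exact sub_nonneg.mpr (one_div_le_one_div_of_le hβ2 hM)
end

section
/- Let Σ be a real symmetric positive semidefinite n×n matrix and σ > 0. For S ⊆ {1,…,n}, let Σ_S denote the principal submatrix of Σ with rows and columns indexed by S, and define F(S) := det(I_{|S|} + σ^{−2}·Σ_S), with F(∅) := 1. Then F is supermodular: for all A ⊆ B ⊆ {1,…,n} and every i ∉ B, F(A ∪ {i}) − F(A) ≤ F(B ∪ {i}) − F(B). In particular, F has generalized curvature 0. -/
/-!
Expanding `det (I + M_S)` multilinearly in the rows gives `F(S) = ∑_{T ⊆ S} det M_T` with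
`M = σ⁻² Σ`. Hence the marginal gain `F(A ∪ {i}) − F(A) = ∑_{T ⊆ A} det M_{T ∪ {i}}` is a sum
of principal minors of a positive semidefinite matrix, which are nonnegative, so it can only
grow when `A` is enlarged to `B`.
-/

open Finset Matrix

/-- The determinantal objective `F(S) = det(I_{|S|} + σ⁻²·Σ_S)`, where `Σ_S` is
the principal submatrix of `Sig` with rows and columns indexed by `S`
(for `S = ∅` this is the determinant of the empty matrix, namely `1`). -/
noncomputable def detObj (n : ℕ) (σ : ℝ) (Sig : Matrix (Fin n) (Fin n) ℝ)
    (S : Finset (Fin n)) : ℝ :=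
  Matrix.det ((1 : Matrix S S ℝ) +
    (σ ^ 2)⁻¹ • Sig.submatrix (fun i : S => (i : Fin n)) (fun j : S => (j : Fin n)))

namespace Finset

theorem univ_map_mapEmbedding_subtype {α : Type*} [DecidableEq α] (S : Finset α) :
    (univ : Finset (Finset S)).map
      (mapEmbedding (Function.Embedding.subtype (· ∈ S))).toEmbedding = S.powerset := by
  ext T
  simp only [mem_map, mem_univ, true_and, RelEmbedding.coe_toEmbedding, mapEmbedding_apply,
    mem_powerset]
  refine ⟨?_, fun hT => ⟨T.subtype (· ∈ S), subtype_map_of_mem fun x hx => hT hx⟩⟩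
  rintro ⟨s, rfl⟩
  exact map_subtype_subset s

theorem sum_powerset_insert_sub_le_sum_powerset_insert_sub {α β : Type*} [DecidableEq α]
    [AddCommGroup β] [PartialOrder β] [IsOrderedAddMonoid β] {f : Finset α → β}
    (hf : ∀ T, 0 ≤ f T) {A B : Finset α} {i : α} (hAB : A ⊆ B) (hiB : i ∉ B) :
    ∑ T ∈ (insert i A).powerset, f T - ∑ T ∈ A.powerset, f T ≤
      ∑ T ∈ (insert i B).powerset, f T - ∑ T ∈ B.powerset, f T := by
  rw [sum_powerset_insert (notMem_mono hAB hiB), sum_powerset_insert hiB, add_sub_cancel_left,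
    add_sub_cancel_left]
  exact sum_le_sum_of_subset_of_nonneg (powerset_mono.2 hAB) fun T _ _ => hf _

end Finset

namespace Matrix

variable {m ι R : Type*} [DecidableEq m] [CommRing R]

def principalMinor (M : Matrix m m R) (s : Finset m) : R :=
  (M.submatrix ((↑) : s → m) (↑)).det

-- The matrix is block triangular for the splitting `s ⊕ sᶜ`, with identity block on `sᶜ`.
theorem det_ite_mem_one [Fintype m] (M : Matrix m m R) (s : Finset m) :
    det (of fun i => if i ∈ s then M i else (1 : Matrix m m R) i) = M.principalMinor s := by
  set N : Matrix m m R := of fun i => if i ∈ s then M i else (1 : Matrix m m R) i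
  have hlower : ∀ i, i ∉ s → ∀ j, j ∈ s → N i j = 0 := fun i hi j hj => by
    simp [N, hi, one_apply_ne (ne_of_mem_of_not_mem hj hi).symm]
  have hs : N.toSquareBlockProp (· ∈ s) = M.submatrix ((↑) : s → m) (↑) := by
    ext i j
    simp [N, toSquareBlockProp_def]
  have hsc : N.toSquareBlockProp (· ∉ s) = 1 := by
    ext i j
    simp [N, toSquareBlockProp_def, i.2, one_apply, Subtype.ext_iff]
  rw [principalMinor, twoBlockTriangular_det N (· ∈ s) hlower, hs, hsc, det_one, mul_one]
  convert rfl

theorem det_one_add_eq_sum_principalMinor [Fintype m] (M : Matrix m m R) :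
    det (1 + M) = ∑ s : Finset m, M.principalMinor s :=
  calc det (1 + M)
      = ∑ s : Finset m, det (of fun i => if i ∈ s then M i else (1 : Matrix m m R) i) := by
        rw [add_comm]
        exact detRowAlternating.map_add_univ M (1 : Matrix m m R)
    _ = ∑ s : Finset m, M.principalMinor s := sum_congr rfl fun s _ => det_ite_mem_one M s

theorem principalMinor_submatrix [DecidableEq ι] (M : Matrix m m R) (f : ι ↪ m)
    (s : Finset ι) :
    (M.submatrix f f).principalMinor s = M.principalMinor (s.map f) := by
  rw [principalMinor, principalMinor, ← det_submatrix_equiv_self (s.equivMap f)]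
  rfl

theorem det_one_add_submatrix_eq_sum_powerset (M : Matrix m m R) (S : Finset m) :
    det (1 + M.submatrix ((↑) : S → m) (↑)) = ∑ T ∈ S.powerset, M.principalMinor T := by
  rw [det_one_add_eq_sum_principalMinor, ← univ_map_mapEmbedding_subtype, sum_map]
  exact sum_congr rfl fun s _ => principalMinor_submatrix M (Function.Embedding.subtype _) s

open scoped ComplexOrder in
theorem PosSemidef.principalMinor_nonneg {𝕜 : Type*} [RCLike 𝕜] {M : Matrix m m 𝕜}
    (hM : M.PosSemidef) (s : Finset m) : 0 ≤ M.principalMinor s :=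
  (hM.submatrix _).det_nonneg

end Matrix

theorem detObj_supermodular_general (n : ℕ) (σ : ℝ)
    (Sig : Matrix (Fin n) (Fin n) ℝ) (hSig : Sig.PosSemidef) :
    (∀ A B : Finset (Fin n), ∀ i : Fin n, A ⊆ B → i ∉ B →
      detObj n σ Sig (insert i A) - detObj n σ Sig A ≤
        detObj n σ Sig (insert i B) - detObj n σ Sig B) ∧
    (∀ Ω S : Finset (Fin n), ∀ i ∈ S, i ∉ Ω →
      detObj n σ Sig (insert i ((S.erase i) ∪ Ω)) - detObj n σ Sig ((S.erase i) ∪ Ω) ≥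
        (1 - 0) * (detObj n σ Sig S - detObj n σ Sig (S.erase i))) := by
  set M := (σ ^ 2)⁻¹ • Sig
  have hM : M.PosSemidef := hSig.smul (by positivity)
  have hF : ∀ S, detObj n σ Sig S = ∑ T ∈ S.powerset, M.principalMinor T := fun S =>
    det_one_add_submatrix_eq_sum_powerset M S
  have hsuper : ∀ A B : Finset (Fin n), ∀ i : Fin n, A ⊆ B → i ∉ B →
      detObj n σ Sig (insert i A) - detObj n σ Sig A ≤
        detObj n σ Sig (insert i B) - detObj n σ Sig B := fun A B i hAB hiB => by
    simp only [hF]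
    exact sum_powerset_insert_sub_le_sum_powerset_insert_sub hM.principalMinor_nonneg hAB hiB
  refine ⟨hsuper, fun Ω S i hiS hiΩ => ?_⟩
  have h := hsuper (S.erase i) (S.erase i ∪ Ω) i subset_union_left (by simp [hiΩ])
  rw [insert_erase hiS] at h
  linarith

/-- **The determinantal function is supermodular** (hence has generalized
curvature `0`): for `Sig` positive semidefinite and `σ > 0`,
`F(A ∪ {i}) − F(A) ≤ F(B ∪ {i}) − F(B)` whenever `A ⊆ B` and `i ∉ B`; in
particular `ρ_i((S\{i}) ∪ Ω) ≥ ρ_i(S\{i})` for all `Ω, S` and `i ∈ S\Ω`. -/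
theorem detObj_supermodular (n : ℕ) (σ : ℝ) (hσ : 0 < σ)
    (Sig : Matrix (Fin n) (Fin n) ℝ) (hSig : Sig.PosSemidef) :
    (∀ A B : Finset (Fin n), ∀ i : Fin n, A ⊆ B → i ∉ B →
      detObj n σ Sig (insert i A) - detObj n σ Sig A ≤
        detObj n σ Sig (insert i B) - detObj n σ Sig B) ∧
    (∀ Ω S : Finset (Fin n), ∀ i ∈ S, i ∉ Ω →
      detObj n σ Sig (insert i ((S.erase i) ∪ Ω)) - detObj n σ Sig ((S.erase i) ∪ Ω) ≥
        (1 - 0) * (detObj n σ Sig S - detObj n σ Sig (S.erase i))) :=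
  detObj_supermodular_general n σ Sig hSig
end
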